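/- arXiv:2603.09039 — 3 statements merged into one kernel-verified Lean document; each statement's English description precedes it below -/
import Mathlib

section
/- There exists a constant C > 0 such that for every even n ∈ ℕ and every integer l with (3/4)n ≤ l ≤ n, one has (∑_{k=m_n}^l 1/(π_n(k) d_n(k))) · Ψ(π_n({l,…,n})) ≤ C, where m_n = n/2 and Ψ(x) = −x log x. -/
open Real Filter Finset MeasureTheory
open scoped Classical BigOperators NNReal

noncomputable section

/-- Configurations of the exclusion–Glauber process on the discrete torus `ℤ/nℤ`. -/
abbrev Cfg (n : ℕ) := Fin n → Bool

/-- Cyclic successor `x+1` on the discrete torus. -/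
def fsucc {n : ℕ} (x : Fin n) : Fin n := ⟨(x.1 + 1) % n, Nat.mod_lt _ x.pos⟩

/-- Cyclic predecessor `x-1` on the discrete torus. -/
def fpred {n : ℕ} (x : Fin n) : Fin n := ⟨(x.1 + n - 1) % n, Nat.mod_lt _ x.pos⟩

/-- `η^{x,x+1}` : exchange the occupation variables at `x` and `x+1`. -/
def swapCfg {n : ℕ} (η : Cfg n) (x : Fin n) : Cfg n :=
  fun y => if y = x then η (fsucc x) else if y = fsucc x then η x else η y

/-- `η^x` : flip the occupation variable at `x`. -/
def flipCfg {n : ℕ} (η : Cfg n) (x : Fin n) : Cfg n :=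
  Function.update η x (! η x)

/-- Occupation variable `η(x) ∈ {0,1}` as a real number. -/
def occ {n : ℕ} (η : Cfg n) (x : Fin n) : ℝ := if η x then 1 else 0

/-- Spin variable `σ(x) = 2η(x) - 1`. -/
def spin {n : ℕ} (η : Cfg n) (x : Fin n) : ℝ := 2 * occ η x - 1

/-- `γ_n = (1 - θ/√n)/2`. -/
def gam (θ : ℝ) (n : ℕ) : ℝ := (1 - θ / Real.sqrt n) / 2

/-- Glauber jump rates `c_x(η)`. -/
def cRate (θ : ℝ) {n : ℕ} (η : Cfg n) (x : Fin n) : ℝ :=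
  1 - gam θ n * spin η x * (spin η (fpred x) + spin η (fsucc x))
    + gam θ n ^ 2 * spin η (fpred x) * spin η (fsucc x)

/-- Exclusion generator. -/
def LexGen {n : ℕ} (f : Cfg n → ℝ) (η : Cfg n) : ℝ :=
  ∑ x, (f (swapCfg η x) - f η)

/-- Glauber generator. -/
def LG (θ : ℝ) {n : ℕ} (f : Cfg n → ℝ) (η : Cfg n) : ℝ :=
  ∑ x, cRate θ η x * (f (flipCfg η x) - f η)

/-- Full generator `L_n = n² L_n^ex + a L_n^G`. -/
def Lfull (θ a : ℝ) {n : ℕ} (f : Cfg n → ℝ) (η : Cfg n) : ℝ :=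
  (n : ℝ) ^ 2 * LexGen f η + a * LG θ f η

/-- `μ` is an invariant (stationary) probability measure for `L_n`. -/
def IsStationaryLn (θ a : ℝ) (n : ℕ) (μ : Cfg n → ℝ) : Prop :=
  (∀ η, 0 ≤ μ η) ∧ (∑ η, μ η = 1) ∧
    ∀ f : Cfg n → ℝ, ∑ η, Lfull θ a f η * μ η = 0

/-- Rescaled total magnetization `Y^n = n^{-3/4} ∑_x (η(x) - 1/2)`. -/
def magY (n : ℕ) (η : Cfg n) : ℝ :=
  (n : ℝ) ^ (-(3 : ℝ) / 4) * ∑ x, (occ η x - 1 / 2)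

/-- The quartic potential `V(y) = θ y² + y⁴/2`. -/
def Vpot (θ : ℝ) (y : ℝ) : ℝ := θ * y ^ 2 + y ^ 4 / 2

/-- Normalization `Z = ∫ e^{-2V}`. -/
def Zconst (θ : ℝ) : ℝ := ∫ y : ℝ, Real.exp (-2 * Vpot θ y)

/-- The function `U`. -/
def Ufun (θ : ℝ) (n : ℕ) (ϱ : ℝ) : ℝ :=
  (gam θ n)⁻¹ * ((1 + 2 * gam θ n * ϱ) * Real.log (1 + 2 * gam θ n * ϱ)
    + (1 - 2 * gam θ n * ϱ) * Real.log (1 - 2 * gam θ n * ϱ))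

/-- `U_0(ρ) = U(ρ - 1/2)`. -/
def U0 (θ : ℝ) (n : ℕ) (ρ : ℝ) : ℝ := Ufun θ n (ρ - 1 / 2)

/-- Total magnetization `m̄_n(η) = ∑_x (η(x) - 1/2)`. -/
def mbar {n : ℕ} (η : Cfg n) : ℝ := ∑ x, (occ η x - 1 / 2)

/-- Uniform measure on `Ω_n`. -/
def nuHalf (n : ℕ) (_ : Cfg n) : ℝ := 1 / 2 ^ n

/-- Normalizing constant `Z_U^n`. -/
def ZU (θ : ℝ) (n : ℕ) : ℝ :=
  ∑ η : Cfg n, Real.exp (n * Ufun θ n (mbar η / n)) * nuHalf n η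

/-- The tilted reference measure `ν_U^n`. -/
def nuU (θ : ℝ) (n : ℕ) (η : Cfg n) : ℝ :=
  (ZU θ n)⁻¹ * Real.exp (n * Ufun θ n (mbar η / n)) * nuHalf n η

/-- Relative entropy `H_n(f | ν_U^n) = ∫ f log f dν_U^n`. -/
def entU (θ : ℝ) (n : ℕ) (f : Cfg n → ℝ) : ℝ :=
  ∑ η, f η * Real.log (f η) * nuU θ n η

/-- Exclusion Dirichlet form `D_n^ex(f; ν_U^n)`. -/
def Dex (θ : ℝ) (n : ℕ) (f : Cfg n → ℝ) : ℝ :=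
  (1 / 2) * ∑ x, ∑ η, (Real.sqrt (f (swapCfg η x)) - Real.sqrt (f η)) ^ 2 * nuU θ n η

/-- Glauber Dirichlet form `D_n^G(f; ν_U^n)`. -/
def DG (θ : ℝ) (n : ℕ) (f : Cfg n → ℝ) : ℝ :=
  (1 / 2) * ∑ x, ∑ η, cRate θ η x * (Real.sqrt (f (flipCfg η x)) - Real.sqrt (f η)) ^ 2 * nuU θ n η

/-- `f` is a probability density with respect to `ν_U^n`. -/
def IsDensity (θ : ℝ) (n : ℕ) (f : Cfg n → ℝ) : Prop :=
  (∀ η, 0 ≤ f η) ∧ ∑ η, f η * nuU θ n η = 1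

/-- Number of particles of a configuration. -/
def ones {n : ℕ} (η : Cfg n) : ℕ := ∑ x, if η x then 1 else 0

/-- `Ω_{n,m}`: configurations with exactly `m` particles. -/
def levelSet (n m : ℕ) : Finset (Cfg n) := Finset.univ.filter fun η => ones η = m

/-- Average `⟨f⟩` with respect to the uniform measure on `Ω_{n,m}`. -/
def avgLevel {n : ℕ} (f : Cfg n → ℝ) (m : ℕ) : ℝ :=
  (∑ η ∈ levelSet n m, f η) / (levelSet n m).card

/-- `π_n(m) = ν_U^n(Ω_{n,m})`. -/
def piBD (θ : ℝ) (n m : ℕ) : ℝ := ∑ η ∈ levelSet n m, nuU θ n η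

/-- Birth rate `b_n(m)`. -/
def bBD (θ : ℝ) (n m : ℕ) : ℝ :=
  ((n : ℝ) - m) * Real.exp (n * (U0 θ n (((m : ℝ) + 1) / n) - U0 θ n ((m : ℝ) / n)) / 2)

/-- Death rate `d_n(m)`. -/
def dBD (θ : ℝ) (n m : ℕ) : ℝ :=
  (m : ℝ) * Real.exp (n * (U0 θ n (((m : ℝ) - 1) / n) - U0 θ n ((m : ℝ) / n)) / 2)

/-- Relative entropy for the birth–death chain. -/
def entBD (θ : ℝ) (n : ℕ) (g : ℕ → ℝ) : ℝ :=
  ∑ m ∈ Finset.range (n + 1), g m * Real.log (g m) * piBD θ n m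

/-- Dirichlet form of the birth–death chain. -/
def DBD (θ : ℝ) (n : ℕ) (g : ℕ → ℝ) : ℝ :=
  (1 / 2) * ∑ m ∈ Finset.range n,
    bBD θ n m * (Real.sqrt (g (m + 1)) - Real.sqrt (g m)) ^ 2 * piBD θ n m

/-- `π_n({l,…,n})`. -/
def piTail (θ : ℝ) (n l : ℕ) : ℝ := ∑ k ∈ Finset.Icc l n, piBD θ n k

/-- `π_n({0,…,l})`. -/
def piHead (θ : ℝ) (n l : ℕ) : ℝ := ∑ k ∈ Finset.Icc 0 l, piBD θ n k

/-- `E(ρ) = ρ log ρ + (1-ρ) log(1-ρ) + log 2`. -/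
def Efun (ρ : ℝ) : ℝ := ρ * Real.log ρ + (1 - ρ) * Real.log (1 - ρ) + Real.log 2

/-- `W = E - U_0`. -/
def Wfun (θ : ℝ) (n : ℕ) (ρ : ℝ) : ℝ := Efun ρ - U0 θ n ρ

/-- `Ψ(x) = -x log x`. -/
def Psi (x : ℝ) : ℝ := -x * Real.log x

namespace TailAux

lemma conv_aux {a b : ℝ} (ha : 0 < a) (hb : 0 < b) :
    a * Real.log a - b * Real.log b ≤ (a - b) * (Real.log a + 1) := by
  have h := Real.log_le_sub_one_of_pos (div_pos ha hb)
  rw [Real.log_div ha.ne' hb.ne'] at h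
  have h2 : b * (Real.log a - Real.log b) ≤ a - b := by
    calc b * (Real.log a - Real.log b) ≤ b * (a / b - 1) :=
          mul_le_mul_of_nonneg_left h hb.le
      _ = a - b := by field_simp
  nlinarith [h2]

lemma gam_bounds {θ : ℝ} {n : ℕ} (hn : 1 ≤ n) (hθ : |θ| * 100 ≤ Real.sqrt n) :
    0.495 ≤ gam θ n ∧ gam θ n ≤ 0.505 := by
  have hs : (0:ℝ) < Real.sqrt n := Real.sqrt_pos.2 (by exact_mod_cast hn)
  have h1 : |θ| / Real.sqrt n ≤ 1 / 100 := by
    rw [div_le_div_iff₀ hs (by norm_num)]; linarith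
  have h2 : |θ / Real.sqrt n| ≤ 1 / 100 := by
    rw [abs_div, abs_of_pos hs]; exact h1
  have h3 := abs_le.1 h2
  unfold gam
  constructor <;> [nlinarith [h3.2]; nlinarith [h3.1]]

lemma two_gam_sub_one (θ : ℝ) (n : ℕ) : 2 * gam θ n - 1 = -(θ / Real.sqrt n) := by
  unfold gam; ring

lemma abs_two_gam_sub_one {θ : ℝ} {n : ℕ} (hn : 1 ≤ n) :
    |2 * gam θ n - 1| = |θ| / Real.sqrt n := by
  have hs : (0:ℝ) < Real.sqrt n := Real.sqrt_pos.2 (by exact_mod_cast hn)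
  rw [two_gam_sub_one, abs_neg, abs_div, abs_of_pos hs]

lemma log_abs_le {s : ℝ} (h1 : 0.495 ≤ s) (h2 : s ≤ 1.505) : |Real.log s| ≤ 1.05 := by
  have hs : (0:ℝ) < s := by linarith
  have l1 : Real.log s ≤ s - 1 := Real.log_le_sub_one_of_pos hs
  have l2 : Real.log s⁻¹ ≤ s⁻¹ - 1 := Real.log_le_sub_one_of_pos (by positivity)
  rw [Real.log_inv] at l2
  have hinv : s⁻¹ ≤ 0.495⁻¹ := by
    apply inv_anti₀ (by norm_num) h1
  rw [abs_le]
  constructor <;> nlinarith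

lemma Ufun_abs {θ : ℝ} {n : ℕ} (hγ1 : 0.495 ≤ gam θ n) (hγ2 : gam θ n ≤ 0.505)
    {ϱ : ℝ} (hϱ : |ϱ| ≤ 1 / 2) : |Ufun θ n ϱ| ≤ 7 := by
  set γ := gam θ n with hγ
  have hϱ' := abs_le.1 hϱ
  have ht : |2 * γ * ϱ| ≤ 0.505 := by
    rw [abs_mul, abs_of_pos (by linarith : (0:ℝ) < 2 * γ)]
    nlinarith [abs_nonneg ϱ]
  have ht' := abs_le.1 ht
  have hA1 : (0.495:ℝ) ≤ 1 + 2 * γ * ϱ := by linarith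
  have hA2 : 1 + 2 * γ * ϱ ≤ 1.505 := by linarith
  have hB1 : (0.495:ℝ) ≤ 1 - 2 * γ * ϱ := by linarith
  have hB2 : 1 - 2 * γ * ϱ ≤ 1.505 := by linarith
  have lA := log_abs_le hA1 hA2
  have lB := log_abs_le hB1 hB2
  have e1 : |(1 + 2 * γ * ϱ) * Real.log (1 + 2 * γ * ϱ)| ≤ 1.505 * 1.05 := by
    rw [abs_mul]
    apply mul_le_mul (by rw [abs_of_pos (by linarith)]; linarith) lA (abs_nonneg _) (by norm_num)
  have e2 : |(1 - 2 * γ * ϱ) * Real.log (1 - 2 * γ * ϱ)| ≤ 1.505 * 1.05 := by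
    rw [abs_mul]
    apply mul_le_mul (by rw [abs_of_pos (by linarith)]; linarith) lB (abs_nonneg _) (by norm_num)
  have hinv : |γ⁻¹| ≤ 0.495⁻¹ := by
    rw [abs_of_pos (by positivity : (0:ℝ) < γ⁻¹)]
    exact inv_anti₀ (by norm_num) hγ1
  unfold Ufun
  rw [← hγ, abs_mul]
  calc |γ⁻¹| * |(1 + 2 * γ * ϱ) * Real.log (1 + 2 * γ * ϱ)
        + (1 - 2 * γ * ϱ) * Real.log (1 - 2 * γ * ϱ)|
      ≤ 0.495⁻¹ * (1.505 * 1.05 + 1.505 * 1.05) := by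
        apply mul_le_mul hinv ((abs_add_le _ _).trans (by linarith)) (abs_nonneg _) (by norm_num)
    _ ≤ 7 := by norm_num

end TailAux

namespace TailAux

lemma ones_card {n : ℕ} (η : Cfg n) :
    ones η = (Finset.univ.filter (fun x => η x = true)).card := by
  rw [Finset.card_filter]; unfold ones
  apply Finset.sum_congr rfl; intro x _
  by_cases h : η x <;> simp [h]

lemma ones_le {n : ℕ} (η : Cfg n) : ones η ≤ n := by
  rw [ones_card]
  calc (Finset.univ.filter fun x => η x = true).card
      ≤ (Finset.univ : Finset (Fin n)).card := Finset.card_le_card (Finset.filter_subset _ _)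
    _ = n := by rw [Finset.card_univ, Fintype.card_fin]

lemma card_levelSet (n m : ℕ) : (levelSet n m).card = n.choose m := by
  have hpc := Finset.card_powersetCard m (Finset.univ : Finset (Fin n))
  rw [Finset.card_univ, Fintype.card_fin] at hpc
  rw [← hpc]
  refine Finset.card_bij' (fun η _ => Finset.univ.filter fun x => η x = true)
      (fun s _ => fun x => decide (x ∈ s)) ?hi ?hj ?li ?ri
  case hi =>
    intro η hη
    rw [Finset.mem_powersetCard]
    refine ⟨Finset.filter_subset _ _, ?_⟩
    rw [← ones_card]
    simpa [levelSet] using hη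
  case hj =>
    intro s hs
    rw [Finset.mem_powersetCard] at hs
    simp only [levelSet, Finset.mem_filter, Finset.mem_univ, true_and]
    rw [ones_card, ← hs.2]
    congr 1
    ext x
    simp
  case li =>
    intro η hη
    funext x
    by_cases h : η x <;> simp [h]
  case ri =>
    intro s hs
    ext x
    simp

lemma mbar_eq {n : ℕ} (η : Cfg n) : mbar η = (ones η : ℝ) - n / 2 := by
  have h : ((ones η : ℕ) : ℝ) = ∑ x, occ η x := by
    unfold ones occ; push_cast
    apply Finset.sum_congr rfl; intro x _
    by_cases hx : η x <;> simp [hx]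
  unfold mbar
  rw [Finset.sum_sub_distrib, ← h, Finset.sum_const, Finset.card_univ, Fintype.card_fin]
  ring

lemma piBD_eq {θ : ℝ} {n : ℕ} (hn : 1 ≤ n) (m : ℕ) :
    piBD θ n m = (ZU θ n)⁻¹ * (1 / 2 ^ n) *
      ((n.choose m : ℝ) * Real.exp (n * U0 θ n (m / n))) := by
  have hn0 : (n:ℝ) ≠ 0 := by positivity
  have h : ∀ η ∈ levelSet n m,
      nuU θ n η = (ZU θ n)⁻¹ * Real.exp (n * U0 θ n (m / n)) * (1 / 2 ^ n) := by
    intro η hη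
    have hones : ones η = m := by simpa [levelSet] using hη
    unfold nuU nuHalf
    have harg : mbar η / n = (m : ℝ) / n - 1 / 2 := by
      rw [div_eq_iff hn0, mbar_eq, hones]; field_simp
    rw [harg]
    rfl
  unfold piBD
  rw [Finset.sum_congr rfl h, Finset.sum_const, card_levelSet, nsmul_eq_mul]
  ring

lemma ZU_pos {θ : ℝ} (n : ℕ) : 0 < ZU θ n := by
  unfold ZU
  apply Finset.sum_pos
  · intro η _; unfold nuHalf; positivity
  · exact Finset.univ_nonempty

lemma abs_mbar_div_le {n : ℕ} (hn : 1 ≤ n) (η : Cfg n) : |mbar η / n| ≤ 1 / 2 := by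
  have hn0 : (0:ℝ) < n := by exact_mod_cast hn
  have h1 : (0:ℝ) ≤ (ones η : ℝ) := by positivity
  have h2 : (ones η : ℝ) ≤ n := by exact_mod_cast ones_le η
  have habs : |(ones η : ℝ) - n / 2| ≤ n / 2 := abs_le.2 ⟨by nlinarith, by nlinarith⟩
  rw [mbar_eq, abs_div, abs_of_pos hn0, div_le_div_iff₀ hn0 (by norm_num)]
  nlinarith [habs]

lemma card_Cfg (n : ℕ) : Fintype.card (Cfg n) = 2 ^ n := by
  simp [Cfg]

lemma ZU_le {θ : ℝ} {n : ℕ} (hn : 1 ≤ n) (hγ1 : 0.495 ≤ gam θ n) (hγ2 : gam θ n ≤ 0.505) :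
    ZU θ n ≤ Real.exp (7 * n) := by
  unfold ZU
  have key : ∀ η : Cfg n, Real.exp (n * Ufun θ n (mbar η / n)) * nuHalf n η
      ≤ Real.exp (7 * n) * (1 / 2 ^ n) := by
    intro η
    unfold nuHalf
    have hU := (abs_le.1 (Ufun_abs hγ1 hγ2 (abs_mbar_div_le hn η))).2
    have hexp : (n : ℝ) * Ufun θ n (mbar η / n) ≤ 7 * n := by
      have hn0 : (0:ℝ) ≤ n := by positivity
      nlinarith
    exact mul_le_mul_of_nonneg_right (Real.exp_le_exp.2 hexp) (by positivity)
  calc (∑ η : Cfg n, Real.exp (n * Ufun θ n (mbar η / n)) * nuHalf n η)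
      ≤ ∑ _η : Cfg n, Real.exp (7 * n) * (1 / 2 ^ n) := Finset.sum_le_sum fun η _ => key η
    _ = (Fintype.card (Cfg n) : ℝ) * (Real.exp (7 * n) * (1 / 2 ^ n)) := by
        rw [Finset.sum_const, Finset.card_univ, nsmul_eq_mul]
    _ = Real.exp (7 * n) := by
        rw [card_Cfg]; push_cast; field_simp

end TailAux

namespace TailAux

/-- Key convexity increment bound for `U0`. -/
lemma U0_incr {θ : ℝ} {n : ℕ} (hγ1 : 0.495 ≤ gam θ n) (hγ2 : gam θ n ≤ 0.505)
    (hn : 1 ≤ n) {r : ℝ} (h1 : 1 ≤ r) (h2 : r ≤ n) :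
    (n : ℝ) * (U0 θ n (r / n) - U0 θ n ((r - 1) / n)) ≤
      2 * (Real.log (1 + 2 * gam θ n * (r / n - 1 / 2))
        - Real.log (1 - 2 * gam θ n * (r / n - 1 / 2))) := by
  set γ := gam θ n with hγdef
  have hn0 : (0:ℝ) < n := by exact_mod_cast hn
  set ϱ : ℝ := r / n - 1 / 2 with hϱdef
  have hϱ1 : -(1/2) ≤ ϱ := by
    rw [hϱdef]; have : 0 < r / n := by positivity
    linarith
  have hϱ2 : ϱ ≤ 1 / 2 := by
    rw [hϱdef]
    have : r / n ≤ 1 := by rw [div_le_one hn0]; exact h2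
    linarith
  have hϱ'1 : -(1/2) ≤ ϱ - 1 / n := by
    rw [hϱdef]
    have : (1:ℝ) / n ≤ r / n := by gcongr
    linarith [this]
  have hϱ'2 : ϱ - 1 / n ≤ 1 / 2 := by
    have : 0 < 1 / (n:ℝ) := by positivity
    linarith
  set A : ℝ := 1 + 2 * γ * ϱ with hA
  set B : ℝ := 1 - 2 * γ * ϱ with hB
  set A' : ℝ := 1 + 2 * γ * (ϱ - 1 / n) with hA'
  set B' : ℝ := 1 - 2 * γ * (ϱ - 1 / n) with hB'
  have hApos : 0 < A := by rw [hA]; nlinarith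
  have hBpos : 0 < B := by rw [hB]; nlinarith
  have hA'pos : 0 < A' := by rw [hA']; nlinarith
  have hB'pos : 0 < B' := by rw [hB']; nlinarith
  have e1 : A * Real.log A - A' * Real.log A' ≤ (2 * γ / n) * (Real.log A + 1) := by
    have := conv_aux hApos hA'pos
    have hd : A - A' = 2 * γ / n := by rw [hA, hA']; field_simp; ring
    rw [hd] at this; exact this
  have e2 : B * Real.log B - B' * Real.log B' ≤ -(2 * γ / n) * (Real.log B + 1) := by
    have := conv_aux hBpos hB'pos
    have hd : B - B' = -(2 * γ / n) := by rw [hB, hB']; field_simp; ring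
    rw [hd] at this; exact this
  have hUr : U0 θ n (r / n) = γ⁻¹ * (A * Real.log A + B * Real.log B) := by
    rw [U0, show r / n - 1 / 2 = ϱ from rfl]; rfl
  have hUr' : U0 θ n ((r - 1) / n) = γ⁻¹ * (A' * Real.log A' + B' * Real.log B') := by
    have harg : (r - 1) / n - 1 / 2 = ϱ - 1 / n := by
      rw [hϱdef]; field_simp; ring
    rw [U0, harg]; rfl
  rw [hUr, hUr']
  have hγpos : (0:ℝ) < γ := by linarith
  have hsum : (A * Real.log A + B * Real.log B) - (A' * Real.log A' + B' * Real.log B')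
      ≤ (2 * γ / n) * (Real.log A - Real.log B) := by linarith [e1, e2]
  have hmul := mul_le_mul_of_nonneg_left hsum (by positivity : (0:ℝ) ≤ n * γ⁻¹)
  calc (n:ℝ) * (γ⁻¹ * (A * Real.log A + B * Real.log B)
        - γ⁻¹ * (A' * Real.log A' + B' * Real.log B'))
      = n * γ⁻¹ * ((A * Real.log A + B * Real.log B)
        - (A' * Real.log A' + B' * Real.log B')) := by ring
    _ ≤ n * γ⁻¹ * ((2 * γ / n) * (Real.log A - Real.log B)) := hmul
    _ = 2 * (Real.log A - Real.log B) := by field_simp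
  -- done

/-- bounds for A and B. -/
lemma AB_bounds {θ : ℝ} {n : ℕ} (hγ1 : 0.495 ≤ gam θ n) (hγ2 : gam θ n ≤ 0.505)
    {ϱ : ℝ} (h1 : -(1/2) ≤ ϱ) (h2 : ϱ ≤ 1/2) :
    0.495 ≤ 1 + 2 * gam θ n * ϱ ∧ 1 + 2 * gam θ n * ϱ ≤ 1.505 ∧
    0.495 ≤ 1 - 2 * gam θ n * ϱ ∧ 1 - 2 * gam θ n * ϱ ≤ 1.505 := by
  refine ⟨by nlinarith, by nlinarith, by nlinarith, by nlinarith⟩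

/-- Lower bound on the death rate. -/
lemma dBD_lb {θ : ℝ} {n : ℕ} (hγ1 : 0.495 ≤ gam θ n) (hγ2 : gam θ n ≤ 0.505)
    (hn : 1 ≤ n) {k : ℕ} (hk1 : 1 ≤ k) (hk2 : k ≤ n) :
    0.32 * k ≤ dBD θ n k := by
  have hn0 : (0:ℝ) < n := by exact_mod_cast hn
  have h1 : (1:ℝ) ≤ (k:ℝ) := by exact_mod_cast hk1
  have h2 : (k:ℝ) ≤ n := by exact_mod_cast hk2
  set γ := gam θ n
  set x := 2 * γ * ((k:ℝ) / n - 1 / 2) with hx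
  have hϱ1 : -(1/2) ≤ (k:ℝ)/n - 1/2 := by
    have : 0 < (k:ℝ)/n := by positivity
    linarith
  have hϱ2 : (k:ℝ)/n - 1/2 ≤ 1/2 := by
    have : (k:ℝ)/n ≤ 1 := by rw [div_le_one hn0]; exact h2
    linarith
  obtain ⟨hA1, hA2, hB1, hB2⟩ := AB_bounds hγ1 hγ2 hϱ1 hϱ2
  have hincr := U0_incr hγ1 hγ2 hn h1 h2
  have hexp : (n:ℝ) * (U0 θ n (((k:ℝ) - 1) / n) - U0 θ n ((k:ℝ) / n)) / 2
      ≥ Real.log ((1 - x) / (1 + x)) := by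
    rw [Real.log_div (by rw [hx]; positivity) (by rw [hx]; positivity)]
    rw [hx]
    nlinarith [hincr]
  unfold dBD
  have : Real.exp ((n:ℝ) * (U0 θ n (((k:ℝ) - 1) / n) - U0 θ n ((k:ℝ) / n)) / 2)
      ≥ (1 - x) / (1 + x) := by
    calc Real.exp ((n:ℝ) * (U0 θ n (((k:ℝ) - 1) / n) - U0 θ n ((k:ℝ) / n)) / 2)
        ≥ Real.exp (Real.log ((1 - x) / (1 + x))) := Real.exp_le_exp.2 hexp
      _ = (1 - x) / (1 + x) := Real.exp_log (by positivity)
  have hfrac : (1 - x) / (1 + x) ≥ 0.32 := by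
    rw [ge_iff_le, le_div_iff₀ (by linarith : (0:ℝ) < 1 + x)]
    nlinarith
  nlinarith [this, hfrac, h1]

end TailAux

namespace TailAux

/-- `B_m = binom(n,m) e^{n U_0(m/n)}`, so that `π_n(m) = Z⁻¹ 2⁻ⁿ B_m`. -/
def BB (θ : ℝ) (n i : ℕ) : ℝ := (n.choose i : ℝ) * Real.exp (n * U0 θ n (i / n))

/-- One-step ratio bound for `B`. -/
def gfun (θ : ℝ) (n i : ℕ) : ℝ :=
  if 18 * n < 25 * i then 0.99 else Real.exp (4 / n + 3 * (|θ| / Real.sqrt n))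

lemma BB_pos {θ : ℝ} {n i : ℕ} (hi : i ≤ n) : 0 < BB θ n i := by
  unfold BB
  have : 0 < n.choose i := Nat.choose_pos hi
  positivity

lemma BB_nonneg {θ : ℝ} {n i : ℕ} : 0 ≤ BB θ n i := by unfold BB; positivity

lemma gfun_pos {θ : ℝ} {n i : ℕ} : 0 < gfun θ n i := by
  unfold gfun; split_ifs <;> positivity

lemma polyA1 (ρ : ℝ) (hρ72 : 0.72 ≤ ρ) (hρ2 : ρ ≤ 1) :
    (1 - ρ) * (1 + 1.01 * (ρ - 1/2)) ^ 2 ≤ 0.97 * (ρ * (1 - 1.01 * (ρ - 1/2)) ^ 2) := by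
  nlinarith [sq_nonneg (ρ - 0.72), sq_nonneg (1 - ρ),
    mul_nonneg (sub_nonneg.2 hρ72) (sub_nonneg.2 hρ2), sq_nonneg (ρ - 1),
    mul_nonneg (mul_nonneg (sub_nonneg.2 hρ72) (sub_nonneg.2 hρ2)) (sub_nonneg.2 hρ72)]

lemma polyA2 (ρ n : ℝ) (hρ72 : 0.72 ≤ ρ) (hρ2 : ρ ≤ 1) (hn : 1000 ≤ n) :
    (1 + 1.01 * (ρ - 1/2)) ^ 2 ≤ 0.02 * (n * (ρ * (1 - 1.01 * (ρ - 1/2)) ^ 2)) := by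
  have b1 : (0.495:ℝ)^2 ≤ (1 - 1.01*(ρ-1/2))^2 := by nlinarith
  have b2 : (0.72:ℝ)*(0.495^2) ≤ ρ*(1-1.01*(ρ-1/2))^2 := by
    nlinarith [mul_nonneg (by linarith : (0:ℝ) ≤ ρ)
      (by linarith : (0:ℝ) ≤ (1-1.01*(ρ-1/2))^2 - 0.495^2)]
  have b3 : (1000:ℝ)*(ρ*(1-1.01*(ρ-1/2))^2) ≤ n*(ρ*(1-1.01*(ρ-1/2))^2) :=
    mul_le_mul_of_nonneg_right hn (by nlinarith)
  nlinarith [b2, b3]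

lemma polyB (ρ : ℝ) (hρ1 : 1/2 ≤ ρ) :
    (1 - ρ) * (1 + (ρ - 1/2)) ^ 2 ≤ ρ * (1 - (ρ - 1/2)) ^ 2 := by
  nlinarith [pow_nonneg (by linarith : (0:ℝ) ≤ ρ - 1/2) 3]

lemma stepA (n i x x₀ ρ : ℝ) (hn : 1000 ≤ n) (hρn : i = ρ * n)
    (hρ72 : 0.72 ≤ ρ) (hρ2 : ρ ≤ 1) (hx₀ : x₀ = ρ - 1/2)
    (hxnn : 0 ≤ x) (hxub : x ≤ 1.01 * x₀) :
    (n - i + 1) * (1 + x) ^ 2 ≤ 0.99 * (i * (1 - x) ^ 2) := by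
  subst hx₀ hρn
  have hn0 : (0:ℝ) < n := by linarith
  have hgood : (0:ℝ) ≤ 1 - 1.01 * (ρ - 1/2) := by linarith
  have e1 : (1 + x) ^ 2 ≤ (1 + 1.01 * (ρ - 1/2)) ^ 2 :=
    pow_le_pow_left₀ (by linarith) (by linarith) 2
  have e2 : (1 - 1.01 * (ρ - 1/2)) ^ 2 ≤ (1 - x) ^ 2 :=
    pow_le_pow_left₀ hgood (by linarith) 2
  have p1 := polyA1 ρ hρ72 hρ2
  have p2 := polyA2 ρ n hρ72 hρ2 hn
  have hmul := mul_le_mul_of_nonneg_left p1 (le_of_lt hn0)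
  have hρn0 : (0:ℝ) ≤ ρ * n := by positivity
  have hfac : (0:ℝ) ≤ n - ρ * n + 1 := by nlinarith
  calc (n - ρ * n + 1) * (1 + x) ^ 2 ≤ (n - ρ * n + 1) * (1 + 1.01 * (ρ - 1/2)) ^ 2 :=
        mul_le_mul_of_nonneg_left e1 hfac
    _ = n * ((1 - ρ) * (1 + 1.01 * (ρ - 1/2)) ^ 2) + (1 + 1.01 * (ρ - 1/2)) ^ 2 := by ring
    _ ≤ n * (0.97 * (ρ * (1 - 1.01 * (ρ - 1/2)) ^ 2))
        + 0.02 * (n * (ρ * (1 - 1.01 * (ρ - 1/2)) ^ 2)) := by linarith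
    _ = 0.99 * ((ρ * n) * (1 - 1.01 * (ρ - 1/2)) ^ 2) := by ring
    _ ≤ 0.99 * ((ρ * n) * (1 - x) ^ 2) :=
        mul_le_mul_of_nonneg_left (mul_le_mul_of_nonneg_left e2 hρn0) (by norm_num)

lemma stepB (n i x x₀ ρ dd : ℝ) (hn : 1000 ≤ n) (hρn : i = ρ * n)
    (hρ1 : 1/2 ≤ ρ) (hρ72 : ρ ≤ 0.72) (hx₀ : x₀ = ρ - 1/2)
    (hddnn : 0 ≤ dd) (hddub : dd ≤ 0.0022)
    (hd1 : -dd ≤ x - x₀) (hd2 : x - x₀ ≤ dd) (hxnn : 0 ≤ x) (hx2 : 0 < 1 - x) :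
    (n - i + 1) * (1 + x) ^ 2
      ≤ ((1 + 4 / n) * ((1 + dd) ^ 2 * (1 + 2 * dd) ^ 2)) * (i * (1 - x) ^ 2) := by
  have hn0 : (0:ℝ) < n := by linarith
  have hx₀1 : 0 ≤ x₀ := by rw [hx₀]; linarith
  have hx₀22 : x₀ ≤ 0.22 := by rw [hx₀]; linarith
  have s1 : (n - i + 1) ≤ (n - i) * (1 + 4 / n) := by
    have h4i : 4 * i ≤ 3 * n := by
      rw [hρn]; nlinarith [mul_nonneg (by linarith : (0:ℝ) ≤ 0.72 - ρ) hn0.le]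
    have hh : (1:ℝ) ≤ (n - i) * 4 / n := by rw [le_div_iff₀ hn0]; nlinarith
    have hexp : (n - i) * (1 + 4 / n) = (n - i) + (n - i) * 4 / n := by ring
    linarith
  have u1 : 1 + x ≤ (1 + x₀) * (1 + dd) := by nlinarith [mul_nonneg hx₀1 hddnn]
  have s2 : (1 + x) ^ 2 ≤ (1 + x₀) ^ 2 * (1 + dd) ^ 2 := by
    calc (1 + x) ^ 2 ≤ ((1 + x₀) * (1 + dd)) ^ 2 := pow_le_pow_left₀ (by linarith) u1 2
      _ = (1 + x₀) ^ 2 * (1 + dd) ^ 2 := by ring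
  have s3 : (n - i) * (1 + x₀) ^ 2 ≤ i * (1 - x₀) ^ 2 := by
    rw [hρn, hx₀]
    nlinarith [mul_le_mul_of_nonneg_left (polyB ρ hρ1) hn0.le]
  have u2 : 1 - x₀ ≤ (1 - x) * (1 + 2 * dd) := by nlinarith
  have s4 : (1 - x₀) ^ 2 ≤ (1 - x) ^ 2 * (1 + 2 * dd) ^ 2 := by
    calc (1 - x₀) ^ 2 ≤ ((1 - x) * (1 + 2 * dd)) ^ 2 := pow_le_pow_left₀ (by linarith) u2 2
      _ = (1 - x) ^ 2 * (1 + 2 * dd) ^ 2 := by ring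
  have hnio : (0:ℝ) ≤ n - i := by nlinarith [mul_nonneg (by linarith : (0:ℝ) ≤ 1 - ρ) hn0.le]
  have hin : (0:ℝ) ≤ i := by rw [hρn]; positivity
  calc (n - i + 1) * (1 + x) ^ 2
      ≤ ((n - i) * (1 + 4 / n)) * ((1 + x₀) ^ 2 * (1 + dd) ^ 2) := by
        apply mul_le_mul s1 s2 (by positivity) (by positivity)
    _ = ((1 + 4 / n) * (1 + dd) ^ 2) * ((n - i) * (1 + x₀) ^ 2) := by ring
    _ ≤ ((1 + 4 / n) * (1 + dd) ^ 2) * (i * (1 - x₀) ^ 2) :=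
        mul_le_mul_of_nonneg_left s3 (by positivity)
    _ ≤ ((1 + 4 / n) * (1 + dd) ^ 2) * (i * ((1 - x) ^ 2 * (1 + 2 * dd) ^ 2)) :=
        mul_le_mul_of_nonneg_left (mul_le_mul_of_nonneg_left s4 hin) (by positivity)
    _ = ((1 + 4 / n) * ((1 + dd) ^ 2 * (1 + 2 * dd) ^ 2)) * (i * (1 - x) ^ 2) := by ring

lemma expBound (n δ dd : ℝ) (hn0 : 0 < n) (hδnn : 0 ≤ δ) (hdd : dd = 0.22 * δ) :
    (1 + 4 / n) * ((1 + dd) ^ 2 * (1 + 2 * dd) ^ 2) ≤ Real.exp (4 / n + 3 * δ) := by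
  have hddnn : 0 ≤ dd := by rw [hdd]; positivity
  have e1 : (1:ℝ) + 4 / n ≤ Real.exp (4 / n) := by
    have := Real.add_one_le_exp ((4:ℝ) / n); linarith
  have e2 : (1:ℝ) + dd ≤ Real.exp dd := by
    have := Real.add_one_le_exp dd; linarith
  have e3 : (1:ℝ) + 2 * dd ≤ Real.exp (2 * dd) := by
    have := Real.add_one_le_exp (2 * dd); linarith
  have hexp : Real.exp (4 / n) * (Real.exp dd ^ 2 * Real.exp (2 * dd) ^ 2)
      = Real.exp (4 / n + 6 * dd) := by
    rw [← Real.exp_nat_mul dd 2, ← Real.exp_nat_mul (2 * dd) 2,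
      ← Real.exp_add, ← Real.exp_add]
    congr 1
    push_cast; ring
  calc (1 + 4 / n) * ((1 + dd) ^ 2 * (1 + 2 * dd) ^ 2)
      ≤ Real.exp (4 / n) * (Real.exp dd ^ 2 * Real.exp (2 * dd) ^ 2) := by
        apply mul_le_mul e1 _ (by positivity) (by positivity)
        apply mul_le_mul _ _ (by positivity) (by positivity)
        · exact pow_le_pow_left₀ (by linarith) e2 2
        · exact pow_le_pow_left₀ (by linarith) e3 2
    _ = Real.exp (4 / n + 6 * dd) := hexp
    _ ≤ Real.exp (4 / n + 3 * δ) := by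
        rw [Real.exp_le_exp, hdd]; linarith

set_option maxHeartbeats 1000000 in
lemma BB_step {θ : ℝ} {n : ℕ} (hn : 1000 ≤ n) (hθ : |θ| * 100 ≤ Real.sqrt n)
    {i : ℕ} (hi1 : n < 2 * i) (hi2 : i ≤ n) :
    BB θ n i ≤ gfun θ n i * BB θ n (i - 1) := by
  have hn1 : 1 ≤ n := by omega
  obtain ⟨hγ1, hγ2⟩ := gam_bounds hn1 hθ
  have hn0 : (0:ℝ) < n := by exact_mod_cast hn1
  have hnR : (1000:ℝ) ≤ n := by exact_mod_cast hn
  have h1i : 1 ≤ i := by omega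
  have hiR1 : (1:ℝ) ≤ (i:ℝ) := by exact_mod_cast h1i
  have hiR2 : (i:ℝ) ≤ n := by exact_mod_cast hi2
  have hiRn : (n:ℝ) < 2 * i := by exact_mod_cast hi1
  obtain ⟨γ, hγdef⟩ : ∃ g : ℝ, g = gam θ n := ⟨_, rfl⟩
  rw [← hγdef] at hγ1 hγ2
  obtain ⟨ρ, hρdef⟩ : ∃ r : ℝ, r = (i:ℝ) / n := ⟨_, rfl⟩
  have hρn : (i:ℝ) = ρ * n := by rw [hρdef]; field_simp
  have hρ1 : 1 / 2 < ρ := by rw [hρdef, lt_div_iff₀ hn0]; linarith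
  have hρ2 : ρ ≤ 1 := by rw [hρdef, div_le_one hn0]; exact hiR2
  obtain ⟨x₀, hx₀def⟩ : ∃ r : ℝ, r = ρ - 1 / 2 := ⟨_, rfl⟩
  obtain ⟨x, hxdef⟩ : ∃ r : ℝ, r = 2 * γ * x₀ := ⟨_, rfl⟩
  have hx₀1 : 0 < x₀ := by rw [hx₀def]; linarith
  have hx₀2 : x₀ ≤ 1 / 2 := by rw [hx₀def]; linarith
  have hxnn : 0 ≤ x := by rw [hxdef]; positivity
  have hxub : x ≤ 1.01 * x₀ := by
    rw [hxdef]; nlinarith [mul_nonneg (by linarith : (0:ℝ) ≤ 1.01 - 2 * γ) hx₀1.le]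
  have hxlb : 0.99 * x₀ ≤ x := by
    rw [hxdef]; nlinarith [mul_nonneg (by linarith : (0:ℝ) ≤ 2 * γ - 0.99) hx₀1.le]
  have hx1 : 0 < 1 + x := by linarith
  have hx2 : 0 < 1 - x := by nlinarith
  -- the main quantitative inequality
  have H : ((n:ℝ) - i + 1) * (1 + x) ^ 2 ≤ gfun θ n i * ((i:ℝ) * (1 - x) ^ 2) := by
    unfold gfun
    split_ifs with hcase
    · have hρ72 : 0.72 ≤ ρ := by
        have h' : (18:ℝ) * n < 25 * i := by exact_mod_cast hcase
        rw [hρdef, le_div_iff₀ hn0]; nlinarith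
      exact stepA n i x x₀ ρ hnR hρn hρ72 hρ2 hx₀def hxnn hxub
    · push_neg at hcase
      have hρ72 : ρ ≤ 0.72 := by
        have h' : (25:ℝ) * i ≤ 18 * n := by exact_mod_cast hcase
        rw [hρdef, div_le_iff₀ hn0]; nlinarith
      obtain ⟨δ, hδdef⟩ : ∃ r : ℝ, r = |θ| / Real.sqrt n := ⟨_, rfl⟩
      rw [← hδdef]
      have hδnn : 0 ≤ δ := by rw [hδdef]; positivity
      have hδub : δ ≤ 0.01 := by
        rw [hδdef, div_le_iff₀ (Real.sqrt_pos.2 (by exact_mod_cast hn1))]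
        nlinarith [hθ, Real.sqrt_nonneg (n:ℝ)]
      obtain ⟨dd, hdddef⟩ : ∃ r : ℝ, r = 0.22 * δ := ⟨_, rfl⟩
      have hddnn : 0 ≤ dd := by rw [hdddef]; positivity
      have hddub : dd ≤ 0.0022 := by rw [hdddef]; linarith
      have hd : |x - x₀| ≤ dd := by
        have h2g : |2 * γ - 1| = δ := by rw [hδdef, hγdef]; exact abs_two_gam_sub_one hn1
        have hdx : x - x₀ = (2 * γ - 1) * x₀ := by rw [hxdef]; ring
        rw [hdx, abs_mul, h2g, abs_of_pos hx₀1, hdddef]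
        have hx₀22 : x₀ ≤ 0.22 := by rw [hx₀def]; linarith
        nlinarith [mul_le_mul_of_nonneg_left hx₀22 hδnn]
      have habsd := abs_le.1 hd
      calc ((n:ℝ) - i + 1) * (1 + x) ^ 2
          ≤ ((1 + 4 / (n:ℝ)) * ((1 + dd) ^ 2 * (1 + 2 * dd) ^ 2)) * ((i:ℝ) * (1 - x) ^ 2) :=
            stepB n i x x₀ ρ dd hnR hρn hρ1.le hρ72 hx₀def hddnn hddub habsd.1 habsd.2 hxnn hx2
        _ ≤ Real.exp (4 / n + 3 * δ) * ((i:ℝ) * (1 - x) ^ 2) := by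
            apply mul_le_mul_of_nonneg_right (expBound (n:ℝ) δ dd hn0 hδnn hdddef)
            positivity
  -- binomial ratio
  have hc : ((n.choose i : ℕ):ℝ) * i = (n.choose (i-1) : ℝ) * ((n:ℝ) - i + 1) := by
    have h := Nat.choose_succ_right_eq n (i - 1)
    rw [Nat.sub_add_cancel h1i] at h
    have h' := congrArg (Nat.cast : ℕ → ℝ) h
    push_cast [Nat.cast_sub (show i - 1 ≤ n by omega), Nat.cast_sub h1i] at h'
    linarith [h']
  -- increment bound, exponential form
  have hincr := U0_incr (θ := θ) (n := n) (hγdef ▸ hγ1) (hγdef ▸ hγ2) hn1 hiR1 hiR2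
  have hincr' : (n:ℝ) * (U0 θ n ((i:ℝ) / n) - U0 θ n (((i:ℝ) - 1) / n))
      ≤ 2 * (Real.log (1 + x) - Real.log (1 - x)) := by
    rw [hxdef, hx₀def, hρdef, hγdef]
    exact hincr
  have hexpD : Real.exp ((n:ℝ) * (U0 θ n ((i:ℝ) / n) - U0 θ n (((i:ℝ) - 1) / n)))
      ≤ ((1 + x) / (1 - x)) ^ 2 := by
    have hlog : (2:ℝ) * (Real.log (1 + x) - Real.log (1 - x))
        = Real.log (((1 + x) / (1 - x)) ^ 2) := by
      rw [Real.log_pow, Real.log_div hx1.ne' hx2.ne']; push_cast; ring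
    calc Real.exp ((n:ℝ) * (U0 θ n ((i:ℝ) / n) - U0 θ n (((i:ℝ) - 1) / n)))
        ≤ Real.exp (Real.log (((1 + x) / (1 - x)) ^ 2)) := by
          rw [Real.exp_le_exp, ← hlog]; exact hincr'
      _ = ((1 + x) / (1 - x)) ^ 2 := Real.exp_log (by positivity)
  -- conclusion
  have hU' : ((i - 1 : ℕ) : ℝ) = (i:ℝ) - 1 := by
    push_cast [Nat.cast_sub h1i]; ring
  have hipos : (0:ℝ) < i := by linarith
  have key0 : ((n.choose i : ℝ)) * (1 + x) ^ 2
      ≤ gfun θ n i * (n.choose (i-1) : ℝ) * (1 - x) ^ 2 := by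
    have h2 : (((n.choose i : ℝ)) * (1 + x) ^ 2) * i
        ≤ (gfun θ n i * (n.choose (i-1) : ℝ) * (1 - x) ^ 2) * i := by
      have hera := mul_le_mul_of_nonneg_left H
        (by positivity : (0:ℝ) ≤ (n.choose (i-1) : ℝ))
      calc (((n.choose i : ℝ)) * (1 + x) ^ 2) * i
          = (((n.choose i : ℝ)) * i) * (1 + x) ^ 2 := by ring
        _ = ((n.choose (i-1) : ℝ) * ((n:ℝ) - i + 1)) * (1 + x) ^ 2 := by rw [hc]
        _ = (n.choose (i-1) : ℝ) * (((n:ℝ) - i + 1) * (1 + x) ^ 2) := by ring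
        _ ≤ (n.choose (i-1) : ℝ) * (gfun θ n i * ((i:ℝ) * (1 - x) ^ 2)) := hera
        _ = (gfun θ n i * (n.choose (i-1) : ℝ) * (1 - x) ^ 2) * i := by ring
    exact le_of_mul_le_mul_right h2 hipos
  have key : ((n.choose i : ℝ)) * ((1 + x) / (1 - x)) ^ 2
      ≤ gfun θ n i * (n.choose (i-1) : ℝ) := by
    rw [div_pow, ← mul_div_assoc, div_le_iff₀ (by positivity : (0:ℝ) < (1 - x) ^ 2)]
    exact key0
  unfold BB
  rw [hU']
  have hsplit : Real.exp ((n:ℝ) * U0 θ n ((i:ℝ) / n))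
      = Real.exp ((n:ℝ) * (U0 θ n ((i:ℝ) / n) - U0 θ n (((i:ℝ) - 1) / n)))
        * Real.exp ((n:ℝ) * U0 θ n (((i:ℝ) - 1) / n)) := by
    rw [← Real.exp_add]; congr 1; ring
  rw [hsplit]
  obtain ⟨E', hE'⟩ : ∃ r : ℝ, r = Real.exp ((n:ℝ) * U0 θ n (((i:ℝ) - 1) / n)) := ⟨_, rfl⟩
  rw [← hE']
  have hE'pos : 0 < E' := by rw [hE']; positivity
  calc (n.choose i : ℝ)
        * (Real.exp ((n:ℝ) * (U0 θ n ((i:ℝ) / n) - U0 θ n (((i:ℝ) - 1) / n))) * E')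
      ≤ (n.choose i : ℝ) * (((1 + x) / (1 - x)) ^ 2 * E') := by
        apply mul_le_mul_of_nonneg_left _ (by positivity)
        exact mul_le_mul_of_nonneg_right hexpD hE'pos.le
    _ = ((n.choose i : ℝ) * ((1 + x) / (1 - x)) ^ 2) * E' := by ring
    _ ≤ (gfun θ n i * (n.choose (i-1) : ℝ)) * E' := mul_le_mul_of_nonneg_right key hE'pos.le
    _ = gfun θ n i * ((n.choose (i - 1) : ℝ) * E') := by ring

lemma BB_chain {θ : ℝ} {n : ℕ} (hn : 1000 ≤ n) (hθ : |θ| * 100 ≤ Real.sqrt n)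
    {k j : ℕ} (hk : n ≤ 2 * k) (hkj : k ≤ j) (hj : j ≤ n) :
    BB θ n j ≤ BB θ n k * ∏ i ∈ Finset.Ioc k j, gfun θ n i := by
  induction j, hkj using Nat.le_induction with
  | base => rw [Finset.Ioc_self, Finset.prod_empty, mul_one]
  | succ j hkj ih =>
    have hj' : j ≤ n := by omega
    have ihj := ih hj'
    have hstep : BB θ n (j + 1) ≤ gfun θ n (j + 1) * BB θ n j := by
      have h := BB_step (θ := θ) hn hθ (i := j + 1) (by omega) hj
      simpa using h
    rw [Finset.prod_Ioc_succ_top (by omega : k ≤ j) (gfun θ n)]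
    calc BB θ n (j + 1) ≤ gfun θ n (j + 1) * BB θ n j := hstep
      _ ≤ gfun θ n (j + 1) * (BB θ n k * ∏ i ∈ Finset.Ioc k j, gfun θ n i) :=
          mul_le_mul_of_nonneg_left ihj gfun_pos.le
      _ = BB θ n k * ((∏ i ∈ Finset.Ioc k j, gfun θ n i) * gfun θ n (j + 1)) := by ring

end TailAux

namespace TailAux

lemma geom_le (N : ℕ) : ∑ m ∈ Finset.range N, (0.99:ℝ) ^ m ≤ 100 := by
  rw [geom_sum_eq (by norm_num : (0.99:ℝ) ≠ 1)]
  have h1 : (0:ℝ) ≤ (0.99:ℝ) ^ N := by positivity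
  have h2 : ((0.99:ℝ) ^ N - 1) / (0.99 - 1) = (1 - (0.99:ℝ) ^ N) * 100 := by ring
  rw [h2]; nlinarith

lemma pow99_le_exp (t : ℕ) : (0.99:ℝ) ^ t ≤ Real.exp (-(0.01) * t) := by
  have h : (0.99:ℝ) ≤ Real.exp (-0.01) := by
    have := Real.add_one_le_exp (-0.01 : ℝ); linarith
  calc (0.99:ℝ) ^ t ≤ (Real.exp (-0.01)) ^ t := pow_le_pow_left₀ (by norm_num) h t
    _ = Real.exp (-(0.01) * t) := by
        rw [← Real.exp_nat_mul]; congr 1; ring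

lemma gfun_le {θ : ℝ} {n i : ℕ} :
    gfun θ n i ≤ Real.exp (4 / n + 3 * (|θ| / Real.sqrt n)) := by
  unfold gfun
  split_ifs
  · calc (0.99:ℝ) ≤ 1 := by norm_num
      _ ≤ _ := Real.one_le_exp (by positivity)
  · exact le_refl _

/-- Sum over `Icc l n` of the tail products. -/
lemma tail_sum_le (θ : ℝ) {n l : ℕ} (hl1 : 3 * n ≤ 4 * l) (hl2 : l ≤ n) :
    ∑ j ∈ Finset.Icc l n, ∏ i ∈ Finset.Ioc l j, gfun θ n i ≤ 100 := by
  have heach : ∀ j ∈ Finset.Icc l n,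
      (∏ i ∈ Finset.Ioc l j, gfun θ n i) = (0.99:ℝ) ^ (j - l) := by
    intro j hj
    rw [Finset.mem_Icc] at hj
    rw [Finset.prod_congr rfl (fun i hi => ?_), Finset.prod_const, Nat.card_Ioc]
    rw [Finset.mem_Ioc] at hi
    unfold gfun
    rw [if_pos (by omega)]
  rw [Finset.sum_congr rfl heach]
  have hre : ∑ j ∈ Finset.Icc l n, (0.99:ℝ) ^ (j - l)
      = ∑ m ∈ Finset.range (n + 1 - l), (0.99:ℝ) ^ m := by
    apply Finset.sum_nbij' (i := fun j => j - l) (j := fun m => m + l)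
    · intro a ha; rw [Finset.mem_Icc] at ha; rw [Finset.mem_range]; omega
    · intro a ha; rw [Finset.mem_range] at ha; rw [Finset.mem_Icc]; omega
    · intro a ha; rw [Finset.mem_Icc] at ha; omega
    · intro a ha; omega
    · intro a _; rfl
  rw [hre]
  exact geom_le _

end TailAux

namespace TailAux

lemma expo_small (c s a : ℝ) (hs : 0 < s) (hc0 : 0 ≤ c) (hc : c * 4 ≤ s * s) (ha : 0 ≤ a) :
    c * (4 / (s * s) + 3 * (a / s)) ≤ 1 + a * s := by
  have ht : 0 < s * s := by positivity
  have h1 : c * (4 / (s * s)) ≤ 1 := by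
    rw [show c * (4 / (s * s)) = c * 4 / (s * s) by ring, div_le_one ht]
    exact hc
  have h2 : c * (3 * (a / s)) ≤ a * s := by
    rw [show c * (3 * (a / s)) = 3 * a * c / s by ring, div_le_iff₀ hs]
    nlinarith [mul_le_mul_of_nonneg_left hc ha]
  nlinarith [h1, h2]

lemma head_sum_le (θ : ℝ) {n l : ℕ} (hn : 1000 ≤ n) (heven : Even n)
    (hθ : |θ| * 100 ≤ Real.sqrt n)
    (hbig : ((n:ℝ)+1) * Real.exp (1 + |θ| * Real.sqrt n) ≤ Real.exp (0.0003 * n))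
    (hl1 : 3 * n ≤ 4 * l) (hl2 : l ≤ n) :
    ∑ k ∈ Finset.Icc (n/2) l, ∏ i ∈ Finset.Ioc k l, gfun θ n i ≤ 101 := by
  have hn2 : n / 2 * 2 = n := Nat.div_mul_cancel heven.two_dvd
  set m₀ := 18 * n / 25 with hm₀
  have hf1 : 25 * m₀ ≤ 18 * n := by omega
  have hf2 : 18 * n < 25 * (m₀ + 1) := by omega
  have hm₀l : m₀ ≤ l := by omega
  have hsplit := Finset.sum_filter_add_sum_filter_not (Finset.Icc (n/2) l)
    (fun k => k < m₀) (fun k => ∏ i ∈ Finset.Ioc k l, gfun θ n i)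
  rw [← hsplit]
  have part2 : ∑ k ∈ (Finset.Icc (n/2) l).filter (fun k => ¬ k < m₀),
      ∏ i ∈ Finset.Ioc k l, gfun θ n i ≤ 100 := by
    have heq : ∀ k ∈ (Finset.Icc (n/2) l).filter (fun k => ¬ k < m₀),
        (∏ i ∈ Finset.Ioc k l, gfun θ n i) = (0.99:ℝ) ^ (l - k) := by
      intro k hk
      rw [Finset.mem_filter, Finset.mem_Icc] at hk
      rw [Finset.prod_congr rfl (fun i hi => ?_), Finset.prod_const, Nat.card_Ioc]
      rw [Finset.mem_Ioc] at hi
      unfold gfun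
      rw [if_pos (by omega)]
    rw [Finset.sum_congr rfl heq]
    have hsub : (Finset.Icc (n/2) l).filter (fun k => ¬ k < m₀) ⊆ Finset.range (l + 1) := by
      intro k hk
      rw [Finset.mem_filter, Finset.mem_Icc] at hk
      rw [Finset.mem_range]; omega
    calc ∑ k ∈ (Finset.Icc (n/2) l).filter (fun k => ¬ k < m₀), (0.99:ℝ) ^ (l - k)
        ≤ ∑ k ∈ Finset.range (l + 1), (0.99:ℝ) ^ (l - k) :=
          Finset.sum_le_sum_of_subset_of_nonneg hsub (fun i _ _ => by positivity)
      _ = ∑ j ∈ Finset.range (l + 1), (0.99:ℝ) ^ (l - (l + 1 - 1 - j)) :=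
          (Finset.sum_range_reflect (fun k => (0.99:ℝ) ^ (l - k)) (l + 1)).symm
      _ = ∑ j ∈ Finset.range (l + 1), (0.99:ℝ) ^ j := by
          apply Finset.sum_congr rfl
          intro j hj
          rw [Finset.mem_range] at hj
          congr 1
          omega
      _ ≤ 100 := geom_le _
  have part1 : ∑ k ∈ (Finset.Icc (n/2) l).filter (fun k => k < m₀),
      ∏ i ∈ Finset.Ioc k l, gfun θ n i ≤ 1 := by
    have hs : (0:ℝ) < Real.sqrt n := Real.sqrt_pos.2 (by positivity)
    have hnn : (n:ℝ) = Real.sqrt n * Real.sqrt n := (Real.mul_self_sqrt (by positivity)).symm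
    have hbound : ∀ k ∈ (Finset.Icc (n/2) l).filter (fun k => k < m₀),
        (∏ i ∈ Finset.Ioc k l, gfun θ n i)
          ≤ Real.exp (1 + |θ| * Real.sqrt n) * Real.exp (-(0.0003) * n) := by
      intro k hk
      rw [Finset.mem_filter, Finset.mem_Icc] at hk
      obtain ⟨⟨hk1, hk2⟩, hk3⟩ := hk
      rw [← Finset.prod_Ioc_consecutive (fun i => gfun θ n i) (show k ≤ m₀ by omega) hm₀l]
      have hA : (∏ i ∈ Finset.Ioc k m₀, gfun θ n i) ≤ Real.exp (1 + |θ| * Real.sqrt n) := by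
        have h1 : (∏ i ∈ Finset.Ioc k m₀, gfun θ n i)
            ≤ ∏ _i ∈ Finset.Ioc k m₀, Real.exp (4 / n + 3 * (|θ| / Real.sqrt n)) :=
          Finset.prod_le_prod (fun i _ => gfun_pos.le) (fun i _ => gfun_le)
        rw [Finset.prod_const, Nat.card_Ioc, ← Real.exp_nat_mul] at h1
        refine h1.trans (Real.exp_le_exp.2 ?_)
        have hc4 : ((m₀ - k : ℕ) : ℝ) * 4 ≤ n := by
          have : (m₀ - k) * 4 ≤ n := by omega
          exact_mod_cast this
        have := expo_small ((m₀ - k : ℕ) : ℝ) (Real.sqrt n) |θ| hs (by positivity)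
          (by rw [← hnn]; exact hc4) (abs_nonneg θ)
        calc ((m₀ - k : ℕ) : ℝ) * (4 / n + 3 * (|θ| / Real.sqrt n))
            = ((m₀ - k : ℕ) : ℝ) * (4 / (Real.sqrt n * Real.sqrt n) + 3 * (|θ| / Real.sqrt n)) := by
              rw [← hnn]
          _ ≤ 1 + |θ| * Real.sqrt n := this
      have hB : (∏ i ∈ Finset.Ioc m₀ l, gfun θ n i) ≤ Real.exp (-(0.0003) * n) := by
        have heq : (∏ i ∈ Finset.Ioc m₀ l, gfun θ n i) = (0.99:ℝ) ^ (l - m₀) := by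
          rw [Finset.prod_congr rfl (fun i hi => ?_), Finset.prod_const, Nat.card_Ioc]
          rw [Finset.mem_Ioc] at hi
          unfold gfun
          rw [if_pos (by omega)]
        rw [heq]
        refine (pow99_le_exp (l - m₀)).trans (Real.exp_le_exp.2 ?_)
        have h3 : 3 * n ≤ 100 * (l - m₀) := by omega
        have h3' : 3 * (n:ℝ) ≤ 100 * ((l - m₀ : ℕ) : ℝ) := by exact_mod_cast h3
        linarith
      exact mul_le_mul hA hB (Finset.prod_nonneg (fun i _ => gfun_pos.le)) (Real.exp_pos _).le
    have hsum := Finset.sum_le_card_nsmul _ _ _ hbound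
    have hcard : ((Finset.Icc (n/2) l).filter (fun k => k < m₀)).card ≤ n + 1 := by
      calc ((Finset.Icc (n/2) l).filter (fun k => k < m₀)).card
          ≤ (Finset.Icc (n/2) l).card := Finset.card_filter_le _ _
        _ = l + 1 - n/2 := Nat.card_Icc _ _
        _ ≤ n + 1 := by omega
    have hEbnn : (0:ℝ) ≤ Real.exp (1 + |θ| * Real.sqrt n) * Real.exp (-(0.0003) * n) := by
      positivity
    calc ∑ k ∈ (Finset.Icc (n/2) l).filter (fun k => k < m₀),
          ∏ i ∈ Finset.Ioc k l, gfun θ n i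
        ≤ ((Finset.Icc (n/2) l).filter (fun k => k < m₀)).card
            • (Real.exp (1 + |θ| * Real.sqrt n) * Real.exp (-(0.0003) * n)) := hsum
      _ = (((Finset.Icc (n/2) l).filter (fun k => k < m₀)).card : ℝ)
            * (Real.exp (1 + |θ| * Real.sqrt n) * Real.exp (-(0.0003) * n)) := by
          rw [nsmul_eq_mul]
      _ ≤ ((n:ℝ) + 1) * (Real.exp (1 + |θ| * Real.sqrt n) * Real.exp (-(0.0003) * n)) := by
          apply mul_le_mul_of_nonneg_right _ hEbnn
          exact_mod_cast hcard
      _ = (((n:ℝ) + 1) * Real.exp (1 + |θ| * Real.sqrt n)) * Real.exp (-(0.0003) * n) := by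
          ring
      _ ≤ Real.exp (0.0003 * n) * Real.exp (-(0.0003) * n) :=
          mul_le_mul_of_nonneg_right hbig (Real.exp_pos _).le
      _ = 1 := by rw [← Real.exp_add]; norm_num
  linarith [part1, part2]

end TailAux

namespace TailAux

lemma nuU_nonneg {θ : ℝ} {n : ℕ} (η : Cfg n) : 0 ≤ nuU θ n η := by
  unfold nuU nuHalf
  have := ZU_pos (θ := θ) n
  positivity

lemma piBD_nonneg (θ : ℝ) (n m : ℕ) : 0 ≤ piBD θ n m :=
  Finset.sum_nonneg (fun η _ => nuU_nonneg η)

lemma dBD_nonneg (θ : ℝ) (n m : ℕ) : 0 ≤ dBD θ n m := by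
  unfold dBD; positivity

set_option maxHeartbeats 1000000 in
lemma main_bound (θ : ℝ) {n l : ℕ} (hn : 1000 ≤ n) (heven : Even n)
    (hθ : |θ| * 100 ≤ Real.sqrt n)
    (hbig : ((n:ℝ)+1) * Real.exp (1 + |θ| * Real.sqrt n) ≤ Real.exp (0.0003 * n))
    (hl1 : 3 * n ≤ 4 * l) (hl2 : l ≤ n) :
    (∑ k ∈ Finset.Icc (n / 2) l, (piBD θ n k * dBD θ n k)⁻¹) * Psi (piTail θ n l)
      ≤ 2000000 := by
  have hn1 : 1 ≤ n := by omega
  obtain ⟨hγ1, hγ2⟩ := gam_bounds hn1 hθ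
  have hn0 : (0:ℝ) < n := by exact_mod_cast hn1
  have hn2 : n / 2 * 2 = n := Nat.div_mul_cancel heven.two_dvd
  have hZpos := ZU_pos (θ := θ) n
  have hZle := ZU_le hn1 hγ1 hγ2
  -- lower bound for the tail probability
  have h2n : (2:ℝ)^n ≤ Real.exp n := by
    calc (2:ℝ)^n ≤ (Real.exp 1)^n :=
          pow_le_pow_left₀ (by norm_num) (by have := Real.add_one_le_exp (1:ℝ); linarith) n
      _ = Real.exp n := by rw [← Real.exp_nat_mul, mul_one]
  have hU0lb : -(7:ℝ) ≤ U0 θ n ((l:ℝ)/n) := by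
    have harg : |(l:ℝ)/n - 1/2| ≤ 1/2 := by
      have h1 : (0:ℝ) ≤ (l:ℝ)/n := by positivity
      have h2 : (l:ℝ)/n ≤ 1 := by
        rw [div_le_one hn0]; exact_mod_cast hl2
      rw [abs_le]; constructor <;> linarith
    exact (abs_le.1 (Ufun_abs hγ1 hγ2 harg)).1
  have hpiBDl : Real.exp (-(15:ℝ)*n) ≤ piBD θ n l := by
    rw [piBD_eq hn1 l]
    have f1 : Real.exp (-(7:ℝ)*n) ≤ (ZU θ n)⁻¹ := by
      rw [show (-(7:ℝ)*n) = -(7*n) by ring, Real.exp_neg]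
      exact inv_anti₀ hZpos hZle
    have f2 : Real.exp (-(1:ℝ)*n) ≤ (1/2^n : ℝ) := by
      rw [show (-(1:ℝ)*n) = -(n:ℝ) by ring, Real.exp_neg, one_div]
      exact inv_anti₀ (by positivity) h2n
    have f3 : Real.exp (-(7:ℝ)*n) ≤ (n.choose l : ℝ) * Real.exp (n * U0 θ n ((l:ℝ)/n)) := by
      have hch : (1:ℝ) ≤ (n.choose l : ℝ) := by
        exact_mod_cast Nat.succ_le_of_lt (Nat.choose_pos hl2)
      have hex : Real.exp (-(7:ℝ)*n) ≤ Real.exp (n * U0 θ n ((l:ℝ)/n)) := by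
        rw [Real.exp_le_exp]
        nlinarith [hU0lb, hn0.le]
      calc Real.exp (-(7:ℝ)*n) = 1 * Real.exp (-(7:ℝ)*n) := by ring
        _ ≤ (n.choose l : ℝ) * Real.exp (n * U0 θ n ((l:ℝ)/n)) :=
            mul_le_mul hch hex (Real.exp_pos _).le (by linarith)
    calc Real.exp (-(15:ℝ)*n)
        = Real.exp (-(7:ℝ)*n) * Real.exp (-(1:ℝ)*n) * Real.exp (-(7:ℝ)*n) := by
          rw [← Real.exp_add, ← Real.exp_add]; congr 1; ring
      _ ≤ (ZU θ n)⁻¹ * (1/2^n) * ((n.choose l : ℝ) * Real.exp (n * U0 θ n ((l:ℝ)/n))) := by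
          apply mul_le_mul _ f3 (Real.exp_pos _).le
          · positivity
          · exact mul_le_mul f1 f2 (Real.exp_pos _).le (by positivity)
  have hTlb : Real.exp (-(15:ℝ)*n) ≤ piTail θ n l := by
    refine hpiBDl.trans ?_
    exact Finset.single_le_sum (fun k _ => piBD_nonneg θ n k)
      (Finset.mem_Icc.2 ⟨le_refl l, hl2⟩)
  have hTpos : 0 < piTail θ n l := lt_of_lt_of_le (Real.exp_pos _) hTlb
  have hlog : -Real.log (piTail θ n l) ≤ 15*n := by
    have h := Real.log_le_log (Real.exp_pos _) hTlb
    rw [Real.log_exp] at h; linarith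
  have hPsi : Psi (piTail θ n l) ≤ (15*(n:ℝ)) * piTail θ n l := by
    unfold Psi
    nlinarith [mul_le_mul_of_nonneg_left hlog hTpos.le]
  have hSnn : 0 ≤ ∑ k ∈ Finset.Icc (n/2) l, (piBD θ n k * dBD θ n k)⁻¹ :=
    Finset.sum_nonneg (fun k _ => inv_nonneg.2 (mul_nonneg (piBD_nonneg θ n k) (dBD_nonneg θ n k)))
  -- per-term bound
  have hter : ∀ k ∈ Finset.Icc (n/2) l, ∀ j ∈ Finset.Icc l n,
      (piBD θ n k * dBD θ n k)⁻¹ * piBD θ n j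
        ≤ 7/(n:ℝ) * ((∏ i ∈ Finset.Ioc k l, gfun θ n i) * ∏ i ∈ Finset.Ioc l j, gfun θ n i) := by
    intro k hk j hj
    rw [Finset.mem_Icc] at hk hj
    obtain ⟨hk1, hk2⟩ := hk
    obtain ⟨hj1, hj2⟩ := hj
    have hk1' : 1 ≤ k := by omega
    have hkn : k ≤ n := le_trans hk2 hl2
    have h2k : n ≤ 2 * k := by omega
    have hkj : k ≤ j := le_trans hk2 hj1
    have hBBk := BB_pos (θ := θ) hkn
    have hd := dBD_lb hγ1 hγ2 hn1 hk1' hkn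
    have hkR : (n:ℝ) ≤ 2*k := by exact_mod_cast h2k
    have hdlb : 0.16*(n:ℝ) ≤ dBD θ n k := by
      have hkr : (1:ℝ) ≤ (k:ℝ) := by exact_mod_cast hk1'
      nlinarith [hd]
    have hdpos : 0 < dBD θ n k := by nlinarith
    have hgeq : (1:ℝ) ≤ 7/(n:ℝ) * dBD θ n k := by
      have h1 : 7/(n:ℝ) * (0.16*n) ≤ 7/(n:ℝ) * dBD θ n k :=
        mul_le_mul_of_nonneg_left hdlb (by positivity)
      have h2 : 7/(n:ℝ) * (0.16*n) = 1.12 := by field_simp; ring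
      linarith
    have hBBj : BB θ n j ≤ BB θ n k
        * ((∏ i ∈ Finset.Ioc k l, gfun θ n i) * ∏ i ∈ Finset.Ioc l j, gfun θ n i) := by
      have h := BB_chain (θ := θ) hn hθ h2k hkj hj2
      rw [← Finset.prod_Ioc_consecutive (fun i => gfun θ n i) hk2 hj1] at h
      exact h
    have hPQnn : (0:ℝ) ≤ (∏ i ∈ Finset.Ioc k l, gfun θ n i) * ∏ i ∈ Finset.Ioc l j, gfun θ n i := by
      apply mul_nonneg <;> exact Finset.prod_nonneg (fun i _ => gfun_pos.le)
    have hpik : piBD θ n k = (ZU θ n)⁻¹ * (1/2^n) * BB θ n k := piBD_eq hn1 k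
    have hpij : piBD θ n j = (ZU θ n)⁻¹ * (1/2^n) * BB θ n j := piBD_eq hn1 j
    rw [hpik, hpij]
    have hcpos : (0:ℝ) < (ZU θ n)⁻¹ * (1/2^n) := by positivity
    rw [inv_mul_le_iff₀ (by positivity : (0:ℝ) < (ZU θ n)⁻¹ * (1/2^n) * BB θ n k * dBD θ n k)]
    calc (ZU θ n)⁻¹ * (1/2^n) * BB θ n j
        ≤ (ZU θ n)⁻¹ * (1/2^n) * (BB θ n k
          * ((∏ i ∈ Finset.Ioc k l, gfun θ n i) * ∏ i ∈ Finset.Ioc l j, gfun θ n i)) :=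
          mul_le_mul_of_nonneg_left hBBj hcpos.le
      _ = ((ZU θ n)⁻¹ * (1/2^n) * BB θ n k
          * ((∏ i ∈ Finset.Ioc k l, gfun θ n i) * ∏ i ∈ Finset.Ioc l j, gfun θ n i)) * 1 := by
          ring
      _ ≤ ((ZU θ n)⁻¹ * (1/2^n) * BB θ n k
          * ((∏ i ∈ Finset.Ioc k l, gfun θ n i) * ∏ i ∈ Finset.Ioc l j, gfun θ n i))
          * (7/(n:ℝ) * dBD θ n k) := by
          apply mul_le_mul_of_nonneg_left hgeq
          positivity
      _ = (ZU θ n)⁻¹ * (1/2^n) * BB θ n k * dBD θ n k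
          * (7/(n:ℝ) * ((∏ i ∈ Finset.Ioc k l, gfun θ n i) * ∏ i ∈ Finset.Ioc l j, gfun θ n i)) := by
          ring
  -- assemble everything
  have hhead := head_sum_le θ hn heven hθ hbig hl1 hl2
  have htail := tail_sum_le θ hl1 hl2
  have hheadnn : (0:ℝ) ≤ ∑ k ∈ Finset.Icc (n/2) l, ∏ i ∈ Finset.Ioc k l, gfun θ n i :=
    Finset.sum_nonneg (fun k _ => Finset.prod_nonneg (fun i _ => gfun_pos.le))
  have htailnn : (0:ℝ) ≤ ∑ j ∈ Finset.Icc l n, ∏ i ∈ Finset.Ioc l j, gfun θ n i :=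
    Finset.sum_nonneg (fun k _ => Finset.prod_nonneg (fun i _ => gfun_pos.le))
  have hST : (∑ k ∈ Finset.Icc (n/2) l, (piBD θ n k * dBD θ n k)⁻¹) * piTail θ n l
      ≤ 7/(n:ℝ) * (101 * 100) := by
    unfold piTail
    rw [Finset.sum_mul_sum]
    have hstep1 : ∑ k ∈ Finset.Icc (n/2) l, ∑ j ∈ Finset.Icc l n,
        (piBD θ n k * dBD θ n k)⁻¹ * piBD θ n j
        ≤ ∑ k ∈ Finset.Icc (n/2) l, ∑ j ∈ Finset.Icc l n,
          7/(n:ℝ) * ((∏ i ∈ Finset.Ioc k l, gfun θ n i) * ∏ i ∈ Finset.Ioc l j, gfun θ n i) :=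
      Finset.sum_le_sum (fun k hk => Finset.sum_le_sum (fun j hj => hter k hk j hj))
    have hfact : ∑ k ∈ Finset.Icc (n/2) l, ∑ j ∈ Finset.Icc l n,
        7/(n:ℝ) * ((∏ i ∈ Finset.Ioc k l, gfun θ n i) * ∏ i ∈ Finset.Ioc l j, gfun θ n i)
        = 7/(n:ℝ) * ((∑ k ∈ Finset.Icc (n/2) l, ∏ i ∈ Finset.Ioc k l, gfun θ n i)
          * (∑ j ∈ Finset.Icc l n, ∏ i ∈ Finset.Ioc l j, gfun θ n i)) := by
      rw [Finset.sum_mul_sum, Finset.mul_sum]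
      exact Finset.sum_congr rfl (fun k _ => by rw [Finset.mul_sum])
    have hprod : (∑ k ∈ Finset.Icc (n/2) l, ∏ i ∈ Finset.Ioc k l, gfun θ n i)
        * (∑ j ∈ Finset.Icc l n, ∏ i ∈ Finset.Ioc l j, gfun θ n i) ≤ 101 * 100 :=
      mul_le_mul hhead htail htailnn (by norm_num)
    calc ∑ k ∈ Finset.Icc (n/2) l, ∑ j ∈ Finset.Icc l n,
          (piBD θ n k * dBD θ n k)⁻¹ * piBD θ n j
        ≤ 7/(n:ℝ) * ((∑ k ∈ Finset.Icc (n/2) l, ∏ i ∈ Finset.Ioc k l, gfun θ n i)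
          * (∑ j ∈ Finset.Icc l n, ∏ i ∈ Finset.Ioc l j, gfun θ n i)) := by
          rw [← hfact]; exact hstep1
      _ ≤ 7/(n:ℝ) * (101 * 100) :=
          mul_le_mul_of_nonneg_left hprod (by positivity)
  calc (∑ k ∈ Finset.Icc (n / 2) l, (piBD θ n k * dBD θ n k)⁻¹) * Psi (piTail θ n l)
      ≤ (∑ k ∈ Finset.Icc (n / 2) l, (piBD θ n k * dBD θ n k)⁻¹)
        * ((15*(n:ℝ)) * piTail θ n l) := mul_le_mul_of_nonneg_left hPsi hSnn
    _ = (15*(n:ℝ)) * ((∑ k ∈ Finset.Icc (n / 2) l, (piBD θ n k * dBD θ n k)⁻¹)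
        * piTail θ n l) := by ring
    _ ≤ (15*(n:ℝ)) * (7/(n:ℝ) * (101 * 100)) := by
        apply mul_le_mul_of_nonneg_left hST (by positivity)
    _ = 1060500 := by field_simp; ring
    _ ≤ 2000000 := by norm_num

end TailAux

namespace TailAux

lemma n_plus_one_le_exp_sqrt (n : ℕ) (hn : 324 ≤ n) :
    ((n:ℝ) + 1) ≤ Real.exp (Real.sqrt n) := by
  obtain ⟨s, hs⟩ : ∃ s : ℝ, s = Real.sqrt n := ⟨_, rfl⟩
  have hsnn : 0 ≤ s := by rw [hs]; positivity
  have hss : (n:ℝ) = s * s := by rw [hs, Real.mul_self_sqrt (by positivity)]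
  have h18 : 18 ≤ s := by
    rw [hs]
    have : ((324:ℕ):ℝ) ≤ (n:ℝ) := by exact_mod_cast hn
    have h324R : (324:ℝ) ≤ (n:ℝ) := by exact_mod_cast hn
    calc (18:ℝ) = Real.sqrt 324 := by
          rw [show (324:ℝ) = 18^2 by norm_num, Real.sqrt_sq (by norm_num)]
      _ ≤ Real.sqrt n := Real.sqrt_le_sqrt h324R
  rw [← hs]
  have hexp3 : Real.exp s = (Real.exp (s/3))^3 := by
    rw [← Real.exp_nat_mul]; congr 1; push_cast; ring
  have hb : (1 + s/3)^3 ≤ (Real.exp (s/3))^3 := by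
    apply pow_le_pow_left₀ (by linarith)
    have := Real.add_one_le_exp (s/3); linarith
  have hpoly : (n:ℝ) + 1 ≤ (1 + s/3)^3 := by
    rw [hss]
    nlinarith [mul_nonneg (by linarith : (0:ℝ) ≤ s - 18) hsnn]
  calc ((n:ℝ) + 1) ≤ (1 + s/3)^3 := hpoly
    _ ≤ (Real.exp (s/3))^3 := hb
    _ = Real.exp s := hexp3.symm

end TailAux



open TailAux

/-- On the interval `[(3/4)n, n]` the product of the resistance sum from
`m_n = n/2` to `l` with `Ψ(π_n([l,n]))` is bounded by a constant. -/
theorem tail_bound_upper_interval (θ : ℝ) :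
    ∃ C : ℝ, 0 < C ∧ ∀ n : ℕ, 1 ≤ n → Even n →
      ∀ l : ℕ, 3 * n ≤ 4 * l → l ≤ n →
        (∑ k ∈ Finset.Icc (n / 2) l, (piBD θ n k * dBD θ n k)⁻¹) * Psi (piTail θ n l)
          ≤ C := by
  obtain ⟨N, hN⟩ := exists_nat_ge (max (max (1000:ℝ) ((|θ| * 100)^2)) (((3 + |θ|) * 3334)^2))
  set Cs : ℝ := ∑ m ∈ Finset.range N, ∑ l ∈ Finset.range (m+1),
      |(∑ k ∈ Finset.Icc (m / 2) l, (piBD θ m k * dBD θ m k)⁻¹) * Psi (piTail θ m l)|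
    with hCs
  have hCsnn : 0 ≤ Cs :=
    Finset.sum_nonneg (fun m _ => Finset.sum_nonneg (fun l _ => abs_nonneg _))
  refine ⟨Cs + 2000000, by linarith, ?_⟩
  intro n hn1 heven l hl1 hl2
  by_cases hcase : n < N
  · -- small n : absorb into the finite sum
    have h1 : |(∑ k ∈ Finset.Icc (n / 2) l, (piBD θ n k * dBD θ n k)⁻¹) * Psi (piTail θ n l)|
        ≤ ∑ l' ∈ Finset.range (n+1),
          |(∑ k ∈ Finset.Icc (n / 2) l', (piBD θ n k * dBD θ n k)⁻¹) * Psi (piTail θ n l')| :=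
      Finset.single_le_sum (a := l)
        (f := fun l' => |(∑ k ∈ Finset.Icc (n / 2) l', (piBD θ n k * dBD θ n k)⁻¹)
          * Psi (piTail θ n l')|)
        (fun l' _ => abs_nonneg _)
        (Finset.mem_range.2 (Nat.lt_succ_of_le hl2))
    have h2 : ∑ l' ∈ Finset.range (n+1),
          |(∑ k ∈ Finset.Icc (n / 2) l', (piBD θ n k * dBD θ n k)⁻¹) * Psi (piTail θ n l')|
        ≤ Cs := by
      rw [hCs]
      exact Finset.single_le_sum (a := n)
        (f := fun m => ∑ l' ∈ Finset.range (m+1),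
          |(∑ k ∈ Finset.Icc (m / 2) l', (piBD θ m k * dBD θ m k)⁻¹) * Psi (piTail θ m l')|)
        (fun m _ => Finset.sum_nonneg (fun l' _ => abs_nonneg _))
        (Finset.mem_range.2 hcase)
    have h3 := le_abs_self
      ((∑ k ∈ Finset.Icc (n / 2) l, (piBD θ n k * dBD θ n k)⁻¹) * Psi (piTail θ n l))
    linarith
  · -- large n : main estimate
    push_neg at hcase
    have hnR : (N:ℝ) ≤ n := by exact_mod_cast hcase
    have hNb := hN.trans hnR
    have h1000 : 1000 ≤ n := by
      have : (1000:ℝ) ≤ n := le_trans (le_trans (le_max_left _ _) (le_max_left _ _)) hNb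
      exact_mod_cast this
    have hθn : |θ| * 100 ≤ Real.sqrt n := by
      rw [Real.le_sqrt (by positivity) (by positivity)]
      exact le_trans (le_trans (le_max_right _ _) (le_max_left _ _)) hNb
    have hbig : ((n:ℝ)+1) * Real.exp (1 + |θ| * Real.sqrt n) ≤ Real.exp (0.0003 * n) := by
      have h324 : 324 ≤ n := by omega
      have hs := n_plus_one_le_exp_sqrt n h324
      have hsq : (((3 + |θ|) * 3334)^2 : ℝ) ≤ n := le_trans (le_max_right _ _) hNb
      have hsle : (3 + |θ|) * 3334 ≤ Real.sqrt n :=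
        (Real.le_sqrt (by positivity) (by positivity)).2 hsq
      have hs1 : (1:ℝ) ≤ Real.sqrt n := by nlinarith [abs_nonneg θ]
      have hss : (n:ℝ) = Real.sqrt n * Real.sqrt n :=
        (Real.mul_self_sqrt (by positivity)).symm
      have hmain : Real.sqrt n + (1 + |θ| * Real.sqrt n) ≤ 0.0003 * n := by
        nlinarith [mul_nonneg
          (by nlinarith [abs_nonneg θ] : (0:ℝ) ≤ 0.0003 * Real.sqrt n - (3 + |θ|))
          (Real.sqrt_nonneg (n:ℝ)), abs_nonneg θ, hs1]
      calc ((n:ℝ)+1) * Real.exp (1 + |θ| * Real.sqrt n)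
          ≤ Real.exp (Real.sqrt n) * Real.exp (1 + |θ| * Real.sqrt n) :=
            mul_le_mul_of_nonneg_right hs (Real.exp_pos _).le
        _ = Real.exp (Real.sqrt n + (1 + |θ| * Real.sqrt n)) := (Real.exp_add _ _).symm
        _ ≤ Real.exp (0.0003 * n) := Real.exp_le_exp.2 hmain
    have := main_bound θ h1000 heven hθn hbig hl1 hl2
    linarith

end
end

section
/- There exist constants K > 0 and c0 > 0 such that for every c2 ≥ c0 there exists N ∈ ℕ with the following property: for every even n ≥ N and every integer l with m_n + c2 n^{3/4} ≤ l ≤ (3/4)n, one has π_n({l,…,n}) ≤ K (n^{3/4}/(l − m_n)) e^{-n W(l/n)}, where m_n = n/2. -/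
open Real Filter Finset MeasureTheory
open scoped Classical BigOperators NNReal

noncomputable section

/-- `μ` is an invariant (stationary) probability measure for `L_n`. -/
def IsStationaryGen (θ a : ℝ) (n : ℕ) (μ : Cfg n → ℝ) : Prop :=
  (∀ η, 0 ≤ μ η) ∧ (∑ η, μ η = 1) ∧
    ∀ f : Cfg n → ℝ, ∑ η, Lfull θ a f η * μ η = 0

/-! Summing over level sets, `π_n(m) ∝ binom(n, m) 2⁻ⁿ e^{n U₀(m/n)} = b_n(m) e^{-n W(m/n)}`, where
`b_n(m) = binom(n, m) 2⁻ⁿ e^{n E(m/n)}` is the mass of `Bin(n, m/n)` at its mean: `b_n(m) ≤ 1`, and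
`b_n(m) ≍ n^{-1/2}` away from the endpoints by Stirling's bounds.

Through the binary entropy, `W'(1/2 + ϱ) = logit(1/2 + ϱ) - 2 logit(1/2 + γ ϱ)`. At `γ = 1/2` this
lies between `4ϱ³` and `8ϱ³`, and `γ_n - 1/2 = O(n^{-1/2})` perturbs it by `O(ϱ / √n)`, so beyond
`l/n` with `l - n/2 ≥ c₂ n^{3/4}` (`c₂` large) we get `W' ≥ δ³`, `δ = l/n - 1/2`. The weights beyond
`l` therefore decay geometrically with ratio `e^{-δ³}`, and the unnormalized tail is
`O(n^{-1/2} δ⁻³ e^{-n W(l/n)})`. On the window `n/2 ≤ m ≤ n/2 + n^{3/4}` we have `n W(m/n) = O(1)`,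
so the partition function is `≳ n^{1/4}`. Dividing, and using `√n δ² ≥ c₂² ≥ 1`, gives the bound. -/

lemma ones_eq_card {n : ℕ} (η : Cfg n) : ones η = (univ.filter fun x => η x = true).card := by
  rw [ones, card_filter]

lemma ones_le {n : ℕ} (η : Cfg n) : ones η ≤ n := by
  simpa [ones_eq_card] using card_filter_le univ (fun x => η x = true)

lemma card_levelSet (n m : ℕ) : (levelSet n m).card = n.choose m := by
  rw [show n.choose m = (powersetCard m (univ : Finset (Fin n))).card by simp]
  refine card_nbij' (fun η => univ.filter fun x => η x = true) (fun s x => decide (x ∈ s))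
    (fun η hη => ?_) (fun s hs => ?_) (fun η _ => ?_) (fun s _ => ?_)
  · simp_all [levelSet, ones_eq_card]
  · simp_all [levelSet, ones_eq_card]
  · funext x; simp
  · ext x; simp

lemma mbar_eq {n : ℕ} (η : Cfg n) : mbar η = ones η - n / 2 := by
  simp only [mbar, ones, occ, sum_sub_distrib, Nat.cast_sum, sum_const, card_univ,
    Fintype.card_fin, nsmul_eq_mul]
  push_cast [apply_ite]
  ring

/-- `Z_U^n π_n(m)`. -/
def piWeight (θ : ℝ) (n m : ℕ) : ℝ := n.choose m / 2 ^ n * exp (n * U0 θ n (m / n))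

lemma exp_mul_nuHalf_of_mem_levelSet {θ : ℝ} {n m : ℕ} (hn : 0 < n) {η : Cfg n}
    (hη : η ∈ levelSet n m) :
    exp (n * Ufun θ n (mbar η / n)) * nuHalf n η = exp (n * U0 θ n (m / n)) / 2 ^ n := by
  rw [mbar_eq, (mem_filter.1 hη).2, U0, nuHalf, sub_div, div_div, mul_comm (2 : ℝ), ← div_div,
    div_self (by positivity)]
  ring

lemma piBD_eq (θ : ℝ) {n : ℕ} (hn : 0 < n) (m : ℕ) : piBD θ n m = piWeight θ n m / ZU θ n := by
  simp only [piBD, nuU, mul_assoc, ← mul_sum]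
  rw [sum_congr rfl fun η hη => exp_mul_nuHalf_of_mem_levelSet hn hη, sum_const, card_levelSet,
    piWeight, nsmul_eq_mul]
  ring

lemma ZU_eq (θ : ℝ) {n : ℕ} (hn : 0 < n) : ZU θ n = ∑ m ∈ range (n + 1), piWeight θ n m := by
  rw [ZU, ← sum_fiberwise_of_maps_to (g := ones) (t := range (n + 1))
    fun η _ => mem_range_succ_iff.2 (ones_le η)]
  refine sum_congr rfl fun m _ => ?_
  change ∑ η ∈ levelSet n m, _ = _
  rw [sum_congr rfl fun η hη => exp_mul_nuHalf_of_mem_levelSet hn hη, sum_const, card_levelSet,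
    piWeight, nsmul_eq_mul]
  ring

lemma piTail_eq (θ : ℝ) {n : ℕ} (hn : 0 < n) (l : ℕ) :
    piTail θ n l = (∑ m ∈ Icc l n, piWeight θ n m) / ZU θ n := by
  simp only [piTail, piBD_eq θ hn, sum_div]

def binomMassAtMean (n m : ℕ) : ℝ := n.choose m * ((m / n : ℝ) ^ m * (1 - m / n : ℝ) ^ (n - m))

lemma binomMassAtMean_le_one {n m : ℕ} (hmn : m ≤ n) : binomMassAtMean n m ≤ 1 := by
  set p : ℝ := m / n
  have hp : 0 ≤ 1 - p := sub_nonneg.2 (div_le_one_of_le₀ (by exact_mod_cast hmn) n.cast_nonneg)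
  calc binomMassAtMean n m = p ^ m * (1 - p) ^ (n - m) * n.choose m := by
        rw [binomMassAtMean]; ring
    _ ≤ ∑ j ∈ range (n + 1), p ^ j * (1 - p) ^ (n - j) * n.choose j :=
        single_le_sum (f := fun j => p ^ j * (1 - p) ^ (n - j) * n.choose j)
          (fun j _ => by positivity) (mem_range_succ_iff.2 hmn)
    _ = 1 := by rw [← add_pow, add_sub_cancel, one_pow]

lemma stirlingSeq_le_exp_one_div_sqrt_two {k : ℕ} (hk : k ≠ 0) :
    Stirling.stirlingSeq k ≤ exp 1 / √2 := by
  obtain ⟨j, rfl⟩ := Nat.exists_eq_succ_of_ne_zero hk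
  rw [← Stirling.stirlingSeq_one]
  exact Stirling.stirlingSeq'_antitone (Nat.zero_le j)

lemma binomMassAtMean_add_eq {m k : ℕ} (hm : m ≠ 0) (hk : k ≠ 0) :
    binomMassAtMean (m + k) m = Stirling.stirlingSeq (m + k)
      / (Stirling.stirlingSeq m * Stirling.stirlingSeq k) * √(m + k) / (√2 * √(m * k)) := by
  have hm' : (0 : ℝ) < m := by positivity
  have hk' : (0 : ℝ) < k := by positivity
  have hmk : (m : ℝ) + k ≠ 0 := by positivity
  have h1 : 1 - (m : ℝ) / (m + k : ℕ) = k / (m + k : ℕ) := by push_cast; field_simp; ring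
  rw [binomMassAtMean, h1, Nat.add_sub_cancel_left, Nat.cast_choose ℝ (Nat.le_add_right m k),
    Nat.add_sub_cancel_left]
  simp only [Stirling.stirlingSeq]
  rw [Real.sqrt_mul (by norm_num), Real.sqrt_mul (by norm_num), Real.sqrt_mul (by norm_num),
    Real.sqrt_mul hm'.le]
  push_cast
  field_simp
  rw [pow_add, ← div_mul_div_cancel₀ (a := (m : ℝ)) (c := exp 1) hmk,
    ← div_mul_div_cancel₀ (a := (k : ℝ)) (c := exp 1) hmk, mul_pow, mul_pow]
  ring

lemma binomMassAtMean_add_le {m k : ℕ} (hm : m ≠ 0) (hk : k ≠ 0) :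
    binomMassAtMean (m + k) m ≤ √(m + k) / (2 * √(m * k)) := by
  have hπ : √π * √π = π := Real.mul_self_sqrt pi_pos.le
  have hσm := Stirling.sqrt_pi_le_stirlingSeq hm
  have hσk := Stirling.sqrt_pi_le_stirlingSeq hk
  have : 0 < √π := by positivity
  have : 0 < Stirling.stirlingSeq m := by linarith
  have : 0 < Stirling.stirlingSeq k := by linarith
  have hratio : Stirling.stirlingSeq (m + k) / (Stirling.stirlingSeq m * Stirling.stirlingSeq k)
      ≤ 1 / √2 := by
    rw [div_le_iff₀ (by positivity)]
    calc Stirling.stirlingSeq (m + k) ≤ exp 1 / √2 :=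
          stirlingSeq_le_exp_one_div_sqrt_two (by omega)
      _ ≤ 1 / √2 * (√π * √π) := by
          rw [hπ]; field_simp; linarith [exp_one_lt_d9, pi_gt_three]
      _ ≤ _ := by gcongr
  rw [binomMassAtMean_add_eq hm hk]
  calc _ ≤ 1 / √2 * √(m + k) / (√2 * √(m * k)) := by gcongr
    _ = _ := by
      have : √2 * √2 = 2 := Real.mul_self_sqrt zero_le_two
      field_simp
      linarith

lemma le_binomMassAtMean_add {m k : ℕ} (hm : m ≠ 0) (hk : k ≠ 0) :
    √(m + k) / (3 * √(m * k)) ≤ binomMassAtMean (m + k) m := by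
  have h2 : √2 ^ 2 = 2 := Real.sq_sqrt zero_le_two
  have hσm := stirlingSeq_le_exp_one_div_sqrt_two hm
  have hσk := stirlingSeq_le_exp_one_div_sqrt_two hk
  have : 0 < Stirling.stirlingSeq m :=
    (Real.sqrt_pos.2 pi_pos).trans_le (Stirling.sqrt_pi_le_stirlingSeq hm)
  have : 0 < Stirling.stirlingSeq k :=
    (Real.sqrt_pos.2 pi_pos).trans_le (Stirling.sqrt_pi_le_stirlingSeq hk)
  have hratio : √2 / 3 ≤
      Stirling.stirlingSeq (m + k) / (Stirling.stirlingSeq m * Stirling.stirlingSeq k) := by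
    rw [le_div_iff₀ (by positivity)]
    calc √2 / 3 * (Stirling.stirlingSeq m * Stirling.stirlingSeq k)
        ≤ √2 / 3 * (exp 1 / √2 * (exp 1 / √2)) := by gcongr
      _ = exp 1 ^ 2 * (√2 / 6) := by field_simp; rw [h2]; ring
      _ ≤ √π := by
          rw [Real.le_sqrt (by positivity) pi_pos.le, mul_pow, div_pow, h2]
          have he : exp 1 ^ 2 < 7.39 := by nlinarith [exp_one_lt_d9, exp_pos 1]
          have he' : (exp 1 ^ 2) ^ 2 < 54.7 := by nlinarith [exp_pos 1]
          linarith [pi_gt_d2]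
      _ ≤ _ := Stirling.sqrt_pi_le_stirlingSeq (by omega)
  rw [binomMassAtMean_add_eq hm hk]
  calc _ = √2 / 3 * √(m + k) / (√2 * √(m * k)) := by field_simp
    _ ≤ _ := by gcongr

lemma binomMassAtMean_le_two_div_sqrt {n m : ℕ} (hm : n ≤ 2 * m) (hm' : 8 * m ≤ 7 * n)
    (hn : 0 < n) : binomMassAtMean n m ≤ 2 / √n := by
  obtain ⟨k, rfl⟩ := Nat.exists_eq_add_of_le (by omega : m ≤ n)
  have hmk : ((m : ℝ) + k) / 4 ≤ √(m * k) := by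
    refine Real.le_sqrt_of_sq_le ?_
    have : (m + k) ^ 2 ≤ 16 * (m * k) := by nlinarith
    have : ((m + k) ^ 2 : ℝ) ≤ 16 * (m * k) := by exact_mod_cast this
    linarith
  have hpos : (0 : ℝ) < m + k := by exact_mod_cast hn
  refine (binomMassAtMean_add_le (by omega) (by omega)).trans ?_
  push_cast
  rw [div_le_div_iff₀ (by linarith) (by positivity), Real.mul_self_sqrt hpos.le]
  linarith

lemma two_div_three_mul_sqrt_le_binomMassAtMean {n m : ℕ} (hm : 0 < m) (hmn : m < n) :
    2 / (3 * √n) ≤ binomMassAtMean n m := by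
  obtain ⟨k, rfl⟩ := Nat.exists_eq_add_of_le hmn.le
  have hk : (0 : ℝ) < k := by exact_mod_cast (by omega : 0 < k)
  have hmk : √(m * k) ≤ ((m : ℝ) + k) / 2 :=
    Real.sqrt_le_iff.2 ⟨by positivity, by nlinarith [sq_nonneg ((m : ℝ) - k)]⟩
  have hpos : (0 : ℝ) < m + k := by positivity
  refine le_trans ?_ (le_binomMassAtMean_add (by omega) (by omega))
  push_cast
  rw [div_le_div_iff₀ (by positivity) (by positivity)]
  nlinarith [Real.mul_self_sqrt hpos.le]

lemma exp_nat_mul_log_div (j : ℕ) {n : ℕ} (hn : 0 < n) :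
    exp (j * log (j / n)) = ((j : ℝ) / n) ^ j := by
  rcases Nat.eq_zero_or_pos j with rfl | hj
  · simp
  · rw [exp_nat_mul, exp_log (by positivity)]

lemma exp_nat_mul_Efun {n m : ℕ} (hmn : m ≤ n) :
    exp (n * Efun (m / n)) = 2 ^ n * ((m / n : ℝ) ^ m * (1 - m / n : ℝ) ^ (n - m)) := by
  rcases Nat.eq_zero_or_pos n with rfl | hn
  · simp_all
  have hsub : 1 - (m : ℝ) / n = ((n - m : ℕ) : ℝ) / n := by
    rw [Nat.cast_sub hmn]; field_simp
  have hsplit : n * Efun (m / n)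
      = m * log (m / n) + (n - m : ℕ) * log ((n - m : ℕ) / n) + n * log 2 := by
    rw [Efun, hsub]; field_simp
  rw [hsplit, exp_add, exp_add, exp_nat_mul_log_div m hn, exp_nat_mul_log_div _ hn, exp_nat_mul,
    exp_log two_pos, hsub]
  ring

lemma piWeight_eq (θ : ℝ) {n m : ℕ} (hmn : m ≤ n) :
    piWeight θ n m = binomMassAtMean n m * exp (-(n * Wfun θ n (m / n))) := by
  calc piWeight θ n m
      = n.choose m / 2 ^ n * exp (n * Efun (m / n)) * exp (-(n * Wfun θ n (m / n))) := by
        rw [piWeight, mul_assoc, ← exp_add, Wfun]; ring_nf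
    _ = _ := by rw [exp_nat_mul_Efun hmn, binomMassAtMean]; field_simp

lemma Efun_eq (ρ : ℝ) : Efun ρ = log 2 - binEntropy ρ := by
  simp only [Efun, binEntropy, Real.log_inv]
  ring

lemma U0_eq (θ : ℝ) (n : ℕ) (ρ : ℝ) :
    U0 θ n ρ = 2 * (gam θ n)⁻¹ * (log 2 - binEntropy (1 / 2 + gam θ n * (ρ - 1 / 2))) := by
  set p := 1 / 2 + gam θ n * (ρ - 1 / 2)
  have h1 : 1 + 2 * gam θ n * (ρ - 1 / 2) = 2 * p := by ring
  have h2 : 1 - 2 * gam θ n * (ρ - 1 / 2) = 2 * (1 - p) := by ring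
  have hmul (x : ℝ) : 2 * x * log (2 * x) = -negMulLog (2 * x) := by simp [negMulLog]
  rw [U0, Ufun, h1, h2, hmul, hmul, negMulLog_mul, negMulLog_mul,
    binEntropy_eq_negMulLog_add_negMulLog_one_sub, negMulLog]
  ring

lemma Wfun_eq (θ : ℝ) (n : ℕ) :
    Wfun θ n = fun ρ => log 2 - binEntropy ρ
      - 2 * (gam θ n)⁻¹ * (log 2 - binEntropy (1 / 2 + gam θ n * (ρ - 1 / 2))) := by
  funext ρ
  rw [Wfun, Efun_eq, U0_eq]

lemma Wfun_half (θ : ℝ) (n : ℕ) : Wfun θ n (1 / 2) = 0 := by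
  simp [Wfun_eq]

lemma continuous_Wfun (θ : ℝ) (n : ℕ) : Continuous (Wfun θ n) := by
  rw [Wfun_eq]
  fun_prop

def logit (p : ℝ) : ℝ := log p - log (1 - p)

lemma hasDerivAt_Wfun {θ : ℝ} {n : ℕ} {ρ : ℝ} (hρ : ρ ∈ Set.Ioo (0 : ℝ) 1) (hγ : gam θ n ≠ 0)
    (hp : 1 / 2 + gam θ n * (ρ - 1 / 2) ∈ Set.Ioo (0 : ℝ) 1) :
    HasDerivAt (Wfun θ n) (logit ρ - 2 * logit (1 / 2 + gam θ n * (ρ - 1 / 2))) ρ := by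
  have hH := hasDerivAt_binEntropy hρ.1.ne' hρ.2.ne
  have hHγ := (hasDerivAt_binEntropy hp.1.ne' hp.2.ne).comp ρ
    (((hasDerivAt_id ρ).sub_const (1 / 2)).const_mul (gam θ n) |>.const_add (1 / 2))
  rw [Wfun_eq]
  refine ((hH.const_sub (log 2)).sub ((hHγ.const_sub (log 2)).const_mul
    (2 * (gam θ n)⁻¹))).congr_deriv ?_
  simp only [logit]
  field_simp
  ring

lemma log_sub_log_le_sub_div {x y : ℝ} (hx : 0 < x) (hy : 0 < y) :
    log x - log y ≤ (x - y) / y := by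
  rw [← log_div hx.ne' hy.ne', sub_div, div_self hy.ne']
  exact log_le_sub_one_of_pos (div_pos hx hy)

lemma sub_div_le_log_sub_log {x y : ℝ} (hx : 0 < x) (hy : 0 < y) :
    (x - y) / x ≤ log x - log y := by
  rw [← log_div hx.ne' hy.ne', sub_div, div_self hx.ne', ← inv_div]
  exact one_sub_inv_le_log_of_pos (div_pos hx hy)

lemma logit_half_add_sub_two_mul_eq {ϱ : ℝ} (h0 : 0 ≤ ϱ) (h1 : ϱ < 1 / 2) :
    logit (1 / 2 + ϱ) - 2 * logit (1 / 2 + ϱ / 2)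
      = log ((1 / 2 + ϱ) * (1 / 2 - ϱ / 2) ^ 2) - log ((1 / 2 - ϱ) * (1 / 2 + ϱ / 2) ^ 2) := by
  have e1 : 1 - (1 / 2 + ϱ) = 1 / 2 - ϱ := by ring
  have e2 : 1 - (1 / 2 + ϱ / 2) = 1 / 2 - ϱ / 2 := by ring
  rw [logit, logit, e1, e2, log_mul (by linarith) (by nlinarith),
    log_mul (by linarith) (by nlinarith), log_pow, log_pow]
  push_cast
  ring

/-- The cubic term of `logit (1/2 + ϱ) = 4 ϱ + 16 ϱ³ / 3 + ⋯` is what survives here. -/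
lemma four_mul_pow_three_le_logit_half_add_sub {ϱ : ℝ} (h0 : 0 ≤ ϱ) (h1 : ϱ < 1 / 2) :
    4 * ϱ ^ 3 ≤ logit (1 / 2 + ϱ) - 2 * logit (1 / 2 + ϱ / 2) := by
  have hA : (1 / 2 + ϱ) * (1 / 2 - ϱ / 2) ^ 2 ≤ 1 / 8 := by
    nlinarith [mul_nonneg (sq_nonneg ϱ) (by linarith : (0 : ℝ) ≤ 3 - 2 * ϱ)]
  have hA0 : 0 < (1 / 2 + ϱ) * (1 / 2 - ϱ / 2) ^ 2 :=
    mul_pos (by linarith) (pow_pos (by linarith) 2)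
  rw [logit_half_add_sub_two_mul_eq h0 h1]
  refine le_trans ?_ (sub_div_le_log_sub_log hA0 (mul_pos (by linarith) (pow_pos (by linarith) 2)))
  rw [le_div_iff₀ hA0]
  nlinarith [mul_le_mul_of_nonneg_left hA (pow_nonneg h0 3)]

lemma logit_half_add_sub_le_eight_mul_pow_three {ϱ : ℝ} (h0 : 0 ≤ ϱ) (h1 : ϱ ≤ 1 / 4) :
    logit (1 / 2 + ϱ) - 2 * logit (1 / 2 + ϱ / 2) ≤ 8 * ϱ ^ 3 := by
  have hB : 1 / 16 ≤ (1 / 2 - ϱ) * (1 / 2 + ϱ / 2) ^ 2 := by nlinarith [pow_nonneg h0 3]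
  rw [logit_half_add_sub_two_mul_eq h0 (by linarith)]
  refine (log_sub_log_le_sub_div (mul_pos (by linarith) (pow_pos (by linarith) 2))
    (by linarith)).trans ?_
  rw [div_le_iff₀ (by linarith)]
  nlinarith [mul_le_mul_of_nonneg_left hB (pow_nonneg h0 3)]

lemma logit_half_add_le_logit_half_add {a b : ℝ} (hb : 0 ≤ b) (hba : b ≤ a) (ha : a < 1 / 2) :
    logit (1 / 2 + b) ≤ logit (1 / 2 + a) := by
  have e (x : ℝ) : 1 - (1 / 2 + x) = 1 / 2 - x := by ring
  rw [logit, logit, e, e]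
  have := log_le_log (x := 1 / 2 + b) (y := 1 / 2 + a) (by linarith) (by linarith)
  have := log_le_log (x := 1 / 2 - a) (y := 1 / 2 - b) (by linarith) (by linarith)
  linarith

lemma logit_half_add_sub_logit_half_add_le {a b : ℝ} (hb : 0 ≤ b) (hba : b ≤ a)
    (ha : a ≤ 3 / 10) : logit (1 / 2 + a) - logit (1 / 2 + b) ≤ 7 * (a - b) := by
  have e (x : ℝ) : 1 - (1 / 2 + x) = 1 / 2 - x := by ring
  have h1 := log_sub_log_le_sub_div (x := 1 / 2 + a) (y := 1 / 2 + b) (by linarith) (by linarith)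
  have h2 := log_sub_log_le_sub_div (x := 1 / 2 - b) (y := 1 / 2 - a) (by linarith) (by linarith)
  have h3 : (1 / 2 + a - (1 / 2 + b)) / (1 / 2 + b) ≤ 2 * (a - b) := by
    rw [div_le_iff₀ (by linarith)]; nlinarith
  have h4 : (1 / 2 - b - (1 / 2 - a)) / (1 / 2 - a) ≤ 5 * (a - b) := by
    rw [div_le_iff₀ (by linarith)]; nlinarith
  rw [logit, logit, e, e]
  linarith

lemma abs_logit_half_add_sub_le {a b : ℝ} (ha : a ∈ Set.Icc (0 : ℝ) (3 / 10))
    (hb : b ∈ Set.Icc (0 : ℝ) (3 / 10)) :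
    |logit (1 / 2 + a) - logit (1 / 2 + b)| ≤ 7 * |a - b| := by
  wlog hba : b ≤ a generalizing a b
  · rw [abs_sub_comm, abs_sub_comm a]
    exact this hb ha (le_of_not_ge hba)
  have hmono := logit_half_add_le_logit_half_add hb.1 hba (by linarith [ha.2])
  rw [abs_of_nonneg (sub_nonneg.2 hmono), abs_of_nonneg (sub_nonneg.2 hba)]
  exact logit_half_add_sub_logit_half_add_le hb.1 hba ha.2

section WfunBounds

variable {θ ε : ℝ} {n : ℕ}

lemma gam_mem_Icc (hγ : |gam θ n - 1 / 2| ≤ ε) (hε : ε ≤ 1 / 100) :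
    gam θ n ∈ Set.Icc (49 / 100 : ℝ) (51 / 100) := by
  constructor <;> linarith [abs_le.1 (hγ.trans hε)]

lemma abs_logit_gam_sub_logit_half_le (hγ : |gam θ n - 1 / 2| ≤ ε) (hε : ε ≤ 1 / 100) {ϱ : ℝ}
    (h0 : 0 ≤ ϱ) (h1 : ϱ < 1 / 2) :
    |logit (1 / 2 + gam θ n * ϱ) - logit (1 / 2 + ϱ / 2)| ≤ 7 * (ε * ϱ) := by
  obtain ⟨hγ0, hγ1⟩ := gam_mem_Icc hγ hε
  calc _ ≤ 7 * |gam θ n * ϱ - ϱ / 2| :=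
        abs_logit_half_add_sub_le ⟨by positivity, by nlinarith⟩ ⟨by positivity, by linarith⟩
    _ = 7 * (|gam θ n - 1 / 2| * ϱ) := by
        rw [show gam θ n * ϱ - ϱ / 2 = (gam θ n - 1 / 2) * ϱ by ring, abs_mul, abs_of_nonneg h0]
    _ ≤ 7 * (ε * ϱ) := by gcongr

lemma hasDerivAt_Wfun_of_mem_Ioo (hγ : |gam θ n - 1 / 2| ≤ ε) (hε : ε ≤ 1 / 100) {ρ : ℝ}
    (hρ : ρ ∈ Set.Ioo (1 / 2 : ℝ) 1) :
    HasDerivAt (Wfun θ n) (logit ρ - 2 * logit (1 / 2 + gam θ n * (ρ - 1 / 2))) ρ := by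
  obtain ⟨hγ0, hγ1⟩ := gam_mem_Icc hγ hε
  obtain ⟨hρ0, hρ1⟩ := hρ
  exact hasDerivAt_Wfun ⟨by linarith, hρ1⟩ (by linarith) ⟨by nlinarith, by nlinarith⟩

lemma differentiableOn_Wfun (hγ : |gam θ n - 1 / 2| ≤ ε) (hε : ε ≤ 1 / 100) {a b : ℝ}
    (ha : 1 / 2 ≤ a) (hb : b ≤ 1) : DifferentiableOn ℝ (Wfun θ n) (Set.Ioo a b) :=
  fun _ hx => (hasDerivAt_Wfun_of_mem_Ioo hγ hε
    ⟨ha.trans_lt hx.1, hx.2.trans_le hb⟩).differentiableAt.differentiableWithinAt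

lemma deriv_Wfun_ge (hγ : |gam θ n - 1 / 2| ≤ ε) (hε : ε ≤ 1 / 100) {ρ : ℝ}
    (hρ : ρ ∈ Set.Ioo (1 / 2 : ℝ) 1) :
    4 * (ρ - 1 / 2) ^ 3 - 14 * (ε * (ρ - 1 / 2)) ≤ deriv (Wfun θ n) ρ := by
  have h0 : 0 ≤ ρ - 1 / 2 := by linarith [hρ.1]
  have h1 : ρ - 1 / 2 < 1 / 2 := by linarith [hρ.2]
  have hcubic := four_mul_pow_three_le_logit_half_add_sub h0 h1
  have hclose := (abs_le.1 (abs_logit_gam_sub_logit_half_le hγ hε h0 h1)).2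
  rw [add_sub_cancel] at hcubic
  rw [(hasDerivAt_Wfun_of_mem_Ioo hγ hε hρ).deriv]
  linarith

lemma deriv_Wfun_le (hγ : |gam θ n - 1 / 2| ≤ ε) (hε : ε ≤ 1 / 100) {ρ : ℝ}
    (hρ : ρ ∈ Set.Ioc (1 / 2 : ℝ) (3 / 4)) :
    deriv (Wfun θ n) ρ ≤ 8 * (ρ - 1 / 2) ^ 3 + 14 * (ε * (ρ - 1 / 2)) := by
  have h0 : 0 ≤ ρ - 1 / 2 := by linarith [hρ.1]
  have h1 : ρ - 1 / 2 ≤ 1 / 4 := by linarith [hρ.2]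
  have hcubic := logit_half_add_sub_le_eight_mul_pow_three h0 h1
  have hclose := (abs_le.1 (abs_logit_gam_sub_logit_half_le hγ hε h0 (by linarith))).1
  rw [add_sub_cancel] at hcubic
  rw [(hasDerivAt_Wfun_of_mem_Ioo hγ hε ⟨hρ.1, by linarith [hρ.2]⟩).deriv]
  linarith

lemma mul_sub_le_Wfun_sub (hγ : |gam θ n - 1 / 2| ≤ ε) (hε : ε ≤ 1 / 100) {a b : ℝ}
    (ha : 1 / 2 < a) (hab : a ≤ b) (hb : b ≤ 1) (hsmall : 14 * ε ≤ 3 * (a - 1 / 2) ^ 2) :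
    (a - 1 / 2) ^ 3 * (b - a) ≤ Wfun θ n b - Wfun θ n a := by
  refine (convex_Icc a b).mul_sub_le_image_sub_of_le_deriv (continuous_Wfun θ n).continuousOn
    (by rw [interior_Icc]; exact differentiableOn_Wfun hγ hε ha.le hb) (fun x hx => ?_)
    a ⟨le_rfl, hab⟩ b ⟨hab, le_rfl⟩ hab
  rw [interior_Icc] at hx
  have ha' : 0 < a - 1 / 2 := by linarith
  have hx' : a - 1 / 2 ≤ x - 1 / 2 := by linarith [hx.1]
  have hε' : 14 * ε ≤ 3 * (x - 1 / 2) ^ 2 :=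
    hsmall.trans (by gcongr)
  nlinarith [deriv_Wfun_ge hγ hε ⟨ha.trans hx.1, hx.2.trans_le hb⟩,
    pow_le_pow_left₀ ha'.le hx' 3, mul_le_mul_of_nonneg_right hε' (ha'.le.trans hx')]

lemma Wfun_le (hγ : |gam θ n - 1 / 2| ≤ ε) (hε : ε ≤ 1 / 100) {b : ℝ}
    (hb : b ∈ Set.Icc (1 / 2 : ℝ) (3 / 4)) :
    Wfun θ n b ≤ 8 * (b - 1 / 2) ^ 4 + 14 * ε * (b - 1 / 2) ^ 2 := by
  have h := (convex_Icc (1 / 2) b).image_sub_le_mul_sub_of_deriv_le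
    (continuous_Wfun θ n).continuousOn
    (by rw [interior_Icc]; exact differentiableOn_Wfun hγ hε le_rfl (by linarith [hb.2]))
    (C := 8 * (b - 1 / 2) ^ 3 + 14 * (ε * (b - 1 / 2))) (fun x hx => ?_)
    (1 / 2) ⟨le_rfl, hb.1⟩ b ⟨hb.1, le_rfl⟩ hb.1
  · rw [Wfun_half, sub_zero] at h
    linarith
  rw [interior_Icc] at hx
  have hε0 : 0 ≤ ε := (abs_nonneg _).trans hγ
  have hx0 : 0 ≤ x - 1 / 2 := by linarith [hx.1]
  have hxb : x - 1 / 2 ≤ b - 1 / 2 := by linarith [hx.2]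
  refine (deriv_Wfun_le hγ hε ⟨hx.1, hx.2.le.trans hb.2⟩).trans ?_
  gcongr

end WfunBounds

lemma sum_Icc_pow_sub_le {x : ℝ} (hx0 : 0 ≤ x) (hx1 : x < 1) (l N : ℕ) :
    ∑ m ∈ Icc l N, x ^ (m - l) ≤ (1 - x)⁻¹ := by
  rw [← Ico_add_one_right_eq_Icc, sum_Ico_eq_sum_range]
  simp only [Nat.add_sub_cancel_left]
  have := geom_sum_Ico_le_of_lt_one (m := 0) (n := N + 1 - l) hx0 hx1
  rwa [← range_eq_Ico, pow_zero, one_div] at this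

lemma inv_one_sub_exp_neg_le {d : ℝ} (h0 : 0 < d) (h1 : d ≤ 1) : (1 - exp (-d))⁻¹ ≤ 2 / d := by
  have h : exp (-d) ≤ 1 - d / 2 := by
    rw [exp_neg, inv_le_iff_one_le_mul₀ (exp_pos d)]
    nlinarith [add_one_le_exp d]
  rw [inv_le_comm₀ (by linarith) (by positivity), inv_div]
  linarith

lemma succ_mul_exp_neg_le {n : ℕ} (hn : 2 ^ 23 ≤ n) :
    (n + 1) * exp (-(n / 512)) ≤ 256 / √n := by
  have hn' : (2 : ℝ) ^ 23 ≤ n := by exact_mod_cast hn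
  have hsq : √n ≤ n := Real.sqrt_le_self_iff.2 (Or.inr (by linarith))
  have hexp := pow_div_factorial_le_exp (x := (n : ℝ) / 512) (by positivity) 3
  norm_num [Nat.factorial] at hexp
  rw [exp_neg, ← div_eq_mul_inv, div_le_div_iff₀ (exp_pos _) (by positivity)]
  calc (n + 1) * √n ≤ 2 * n * n := by nlinarith [Real.sqrt_nonneg (n : ℝ)]
    _ ≤ 256 * ((n / 512) ^ 3 / 6) := by
        nlinarith [mul_nonneg (mul_nonneg n.cast_nonneg n.cast_nonneg) (sub_nonneg.2 hn')]
    _ ≤ _ := by gcongr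

lemma pos_of_half_lt_div {l n : ℕ} (h : 1 / 2 < (l : ℝ) / n) : 0 < n := by
  rcases Nat.eq_zero_or_pos n with rfl | hn
  · simp at h; linarith
  · exact hn

section Tail

variable {θ ε : ℝ} {n l : ℕ}

lemma exp_neg_Wfun_le_of_le (hγ : |gam θ n - 1 / 2| ≤ ε) (hε : ε ≤ 1 / 100)
    (hl : 1 / 2 < (l : ℝ) / n) (hsmall : 14 * ε ≤ 3 * ((l : ℝ) / n - 1 / 2) ^ 2) {m : ℕ}
    (hlm : l ≤ m) (hmn : m ≤ n) :
    exp (-(n * Wfun θ n (m / n)))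
      ≤ exp (-(n * Wfun θ n (l / n))) * exp (-((l : ℝ) / n - 1 / 2) ^ 3) ^ (m - l) := by
  have hn : (0 : ℝ) < n := by exact_mod_cast pos_of_half_lt_div hl
  have hW := mul_le_mul_of_nonneg_left (mul_sub_le_Wfun_sub hγ hε hl (b := m / n) (by gcongr)
    (div_le_one_of_le₀ (by exact_mod_cast hmn) hn.le) hsmall) hn.le
  have : (n : ℝ) * (((l : ℝ) / n - 1 / 2) ^ 3 * ((m : ℝ) / n - l / n))
      = ((l : ℝ) / n - 1 / 2) ^ 3 * (m - l) := by field_simp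
  rw [← exp_nat_mul, ← exp_add, exp_le_exp, Nat.cast_sub hlm]
  nlinarith

lemma exp_neg_Wfun_le_of_far (hγ : |gam θ n - 1 / 2| ≤ ε) (hε : ε ≤ 1 / 100)
    (hl : 1 / 2 < (l : ℝ) / n) (hl' : 4 * l ≤ 3 * n)
    (hsmall : 14 * ε ≤ 3 * ((l : ℝ) / n - 1 / 2) ^ 2) {m : ℕ} (hm : 7 * n ≤ 8 * m) (hmn : m ≤ n) :
    exp (-(n * Wfun θ n (m / n))) ≤ exp (-(n * Wfun θ n (l / n))) * exp (-(n / 512)) := by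
  have hn : (0 : ℝ) < n := by exact_mod_cast pos_of_half_lt_div hl
  have hl34 : (l : ℝ) / n ≤ 3 / 4 := by
    rw [div_le_iff₀ hn]
    have : (4 * l : ℝ) ≤ 3 * n := by exact_mod_cast hl'
    linarith
  have hm78 : 7 / 8 ≤ (m : ℝ) / n := by
    rw [le_div_iff₀ hn]
    have : (7 * n : ℝ) ≤ 8 * m := by exact_mod_cast hm
    linarith
  have h1 := mul_sub_le_Wfun_sub hγ hε hl hl34 (by norm_num) hsmall
  have h2 := mul_sub_le_Wfun_sub hγ hε (a := 3 / 4) (b := m / n) (by norm_num) (by linarith)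
    (div_le_one_of_le₀ (by exact_mod_cast hmn) hn.le) (by linarith)
  have h3 : 0 ≤ ((l : ℝ) / n - 1 / 2) ^ 3 * (3 / 4 - l / n) :=
    mul_nonneg (pow_nonneg (by linarith) 3) (by linarith)
  rw [← exp_add, exp_le_exp]
  nlinarith

lemma piWeight_le_of_mem_Icc (hγ : |gam θ n - 1 / 2| ≤ ε) (hε : ε ≤ 1 / 100)
    (hl : 1 / 2 < (l : ℝ) / n) (hl' : 4 * l ≤ 3 * n)
    (hsmall : 14 * ε ≤ 3 * ((l : ℝ) / n - 1 / 2) ^ 2) {m : ℕ} (hm : m ∈ Icc l n) :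
    piWeight θ n m ≤ (2 / √n * exp (-((l : ℝ) / n - 1 / 2) ^ 3) ^ (m - l) + exp (-(n / 512)))
      * exp (-(n * Wfun θ n (l / n))) := by
  obtain ⟨hlm, hmn⟩ := mem_Icc.1 hm
  have hn := pos_of_half_lt_div hl
  have h2l : n < 2 * l := by
    rw [lt_div_iff₀ (by exact_mod_cast hn)] at hl
    exact_mod_cast (by linarith : (n : ℝ) < 2 * l)
  have hW := exp_pos (-(n * Wfun θ n (l / n)))
  rw [piWeight_eq θ hmn]
  rcases le_or_gt (8 * m) (7 * n) with hbulk | hfar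
  · calc _ ≤ 2 / √n
          * (exp (-(n * Wfun θ n (l / n))) * exp (-((l : ℝ) / n - 1 / 2) ^ 3) ^ (m - l)) :=
          mul_le_mul (binomMassAtMean_le_two_div_sqrt (by omega) hbulk hn)
            (exp_neg_Wfun_le_of_le hγ hε hl hsmall hlm hmn) (exp_pos _).le (by positivity)
      _ ≤ _ := by nlinarith [exp_pos (-(n / 512 : ℝ))]
  · calc _ ≤ 1 * (exp (-(n * Wfun θ n (l / n))) * exp (-(n / 512))) :=
          mul_le_mul (binomMassAtMean_le_one hmn)
            (exp_neg_Wfun_le_of_far hγ hε hl hl' hsmall (by omega) hmn) (exp_pos _).le zero_le_one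
      _ ≤ _ := by
          have : 0 ≤ 2 / √n * exp (-((l : ℝ) / n - 1 / 2) ^ 3) ^ (m - l) := by positivity
          nlinarith

lemma sum_piWeight_Icc_le (hγ : |gam θ n - 1 / 2| ≤ ε) (hε : ε ≤ 1 / 100) (hn : 2 ^ 23 ≤ n)
    (hl : 1 / 2 < (l : ℝ) / n) (hl' : 4 * l ≤ 3 * n)
    (hsmall : 14 * ε ≤ 3 * ((l : ℝ) / n - 1 / 2) ^ 2) :
    ∑ m ∈ Icc l n, piWeight θ n m
      ≤ 8 / (√n * ((l : ℝ) / n - 1 / 2) ^ 3) * exp (-(n * Wfun θ n (l / n))) := by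
  set δ := (l : ℝ) / n - 1 / 2 with hδ_def
  have hn0 : (0 : ℝ) < n := by exact_mod_cast pos_of_half_lt_div hl
  have hδ0 : 0 < δ := by linarith
  have hδ : δ ≤ 1 / 4 := by
    have : (4 * l : ℝ) ≤ 3 * n := by exact_mod_cast hl'
    have : (l : ℝ) / n ≤ 3 / 4 := by rw [div_le_iff₀ hn0]; linarith
    linarith
  have hδ3 : δ ^ 3 ≤ 1 / 64 := by
    calc δ ^ 3 ≤ (1 / 4) ^ 3 := by gcongr
      _ = 1 / 64 := by norm_num
  have hgeom : ∑ m ∈ Icc l n, exp (-δ ^ 3) ^ (m - l) ≤ 2 / δ ^ 3 :=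
    (sum_Icc_pow_sub_le (exp_pos _).le (exp_lt_one_iff.2 (by linarith [pow_pos hδ0 3])) l n).trans
      (inv_one_sub_exp_neg_le (pow_pos hδ0 3) (by linarith))
  have hfar : ((Icc l n).card : ℝ) * exp (-(n / 512)) ≤ 4 / (√n * δ ^ 3) := by
    have hcard : ((Icc l n).card : ℝ) ≤ n + 1 := by
      rw [Nat.card_Icc]; exact_mod_cast (by omega : n + 1 - l ≤ n + 1)
    calc _ ≤ (n + 1) * exp (-(n / 512)) := by gcongr
      _ ≤ 256 / √n := succ_mul_exp_neg_le hn
      _ ≤ _ := by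
        rw [div_le_div_iff₀ (by positivity) (by positivity)]
        nlinarith [Real.sqrt_pos.2 hn0]
  calc _ ≤ ∑ m ∈ Icc l n, (2 / √n * exp (-δ ^ 3) ^ (m - l) + exp (-(n / 512)))
        * exp (-(n * Wfun θ n (l / n))) :=
        sum_le_sum fun m hm => piWeight_le_of_mem_Icc hγ hε hl hl' hsmall hm
    _ = (2 / √n * ∑ m ∈ Icc l n, exp (-δ ^ 3) ^ (m - l) + (Icc l n).card * exp (-(n / 512)))
        * exp (-(n * Wfun θ n (l / n))) := by
        rw [← sum_mul, sum_add_distrib, mul_sum, sum_const, nsmul_eq_mul]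
    _ ≤ (2 / √n * (2 / δ ^ 3) + 4 / (√n * δ ^ 3)) * exp (-(n * Wfun θ n (l / n))) := by
        gcongr
    _ = _ := by rw [div_mul_div_comm]; ring

end Tail

lemma rpow_one_fourth_pow {x : ℝ} (hx : 0 ≤ x) (k : ℕ) :
    (x ^ ((1 : ℝ) / 4)) ^ k = x ^ ((k : ℝ) / 4) := by
  rw [← Real.rpow_natCast, ← Real.rpow_mul hx]; ring_nf

lemma rpow_three_fourths_sq {x : ℝ} (hx : 0 ≤ x) : (x ^ ((3 : ℝ) / 4)) ^ 2 = x * √x := by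
  rw [← Real.rpow_natCast, ← Real.rpow_mul hx, Real.sqrt_eq_rpow,
    ← Real.rpow_one_add' hx (by norm_num)]
  norm_num

section PartitionFunction

variable {θ ε : ℝ} {n : ℕ}

lemma le_piWeight_of_mem_Icc (hγ : |gam θ n - 1 / 2| ≤ ε) (hε : ε ≤ 1 / 100) {t u : ℕ}
    (ht : n = t + t) (hu : 4 * u ≤ n) (hn : 0 < n) {m : ℕ} (hm : m ∈ Icc t (t + u)) :
    2 / (3 * √n) * exp (-(8 * u ^ 4 / n ^ 3 + 14 * ε * u ^ 2 / n)) ≤ piWeight θ n m := by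
  obtain ⟨htm, hmu⟩ := mem_Icc.1 hm
  have hn' : (0 : ℝ) < n := by exact_mod_cast hn
  have htR : (t : ℝ) = n / 2 := by rw [ht]; push_cast; ring
  set ϱ := (m : ℝ) / n - 1 / 2 with hϱ
  have hϱ0 : 0 ≤ ϱ := by
    rw [hϱ, sub_nonneg, le_div_iff₀ hn']
    have : (t : ℝ) ≤ m := by exact_mod_cast htm
    linarith
  have hϱu : ϱ ≤ u / n := by
    rw [hϱ, sub_le_iff_le_add, div_le_iff₀ hn']
    have : (m : ℝ) ≤ t + u := by exact_mod_cast hmu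
    field_simp
    linarith
  have hu' : (u : ℝ) / n ≤ 1 / 4 := by
    rw [div_le_iff₀ hn']
    have : (4 * u : ℝ) ≤ n := by exact_mod_cast hu
    linarith
  have hW : Wfun θ n (m / n) ≤ 8 * ϱ ^ 4 + 14 * ε * ϱ ^ 2 :=
    Wfun_le hγ hε ⟨by linarith, by linarith⟩
  have hε0 : 0 ≤ ε := (abs_nonneg _).trans hγ
  have hnW : n * Wfun θ n (m / n) ≤ 8 * u ^ 4 / n ^ 3 + 14 * ε * u ^ 2 / n := by
    have h4 : ϱ ^ 4 ≤ (u / n) ^ 4 := by gcongr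
    have h2 : ϱ ^ 2 ≤ (u / n) ^ 2 := by gcongr
    calc n * Wfun θ n (m / n) ≤ n * (8 * (u / n) ^ 4 + 14 * ε * (u / n) ^ 2) := by
          gcongr
          nlinarith
      _ = _ := by field_simp
  have hmass := two_div_three_mul_sqrt_le_binomMassAtMean (n := n) (m := m) (by omega) (by omega)
  rw [piWeight_eq θ (by omega)]
  exact mul_le_mul hmass (exp_le_exp.2 (by linarith)) (exp_pos _).le
    ((by positivity : (0 : ℝ) ≤ 2 / (3 * √n)).trans hmass)

lemma le_ZU (hγ : |gam θ n - 1 / 2| ≤ ε) (hε : ε ≤ 1 / 100) (hn : Even n) (hn0 : 0 < n) {u : ℕ}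
    (hu : 4 * u ≤ n) :
    (u + 1) * (2 / (3 * √n) * exp (-(8 * u ^ 4 / n ^ 3 + 14 * ε * u ^ 2 / n))) ≤ ZU θ n := by
  obtain ⟨t, ht⟩ := hn
  rw [ZU_eq θ hn0]
  calc _ = ∑ _m ∈ Icc t (t + u),
        2 / (3 * √n) * exp (-(8 * u ^ 4 / n ^ 3 + 14 * ε * u ^ 2 / n)) := by
        rw [sum_const, Nat.card_Icc, nsmul_eq_mul, show t + u + 1 - t = u + 1 by omega]
        push_cast; ring
    _ ≤ ∑ m ∈ Icc t (t + u), piWeight θ n m :=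
        sum_le_sum fun m hm => le_piWeight_of_mem_Icc hγ hε ht hu hn0 hm
    _ ≤ _ := by
        refine sum_le_sum_of_subset_of_nonneg (fun m hm => ?_) fun m _ _ => ?_
        · simp only [mem_Icc, mem_range] at hm ⊢; omega
        · rw [piWeight]; positivity

lemma le_ZU_of_even (hγ : |gam θ n - 1 / 2| ≤ ε) (hε : ε ≤ 1 / 100) (hn : Even n)
    (hn256 : 256 ≤ n) :
    2 / 3 * (n : ℝ) ^ ((1 : ℝ) / 4) * exp (-(8 + 14 * ε * √n)) ≤ ZU θ n := by
  set r := (n : ℝ) ^ ((1 : ℝ) / 4)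
  have hn0 : (0 : ℝ) ≤ n := n.cast_nonneg
  have hr4 : r ^ 4 = n := by rw [rpow_one_fourth_pow hn0]; norm_num
  have hr2 : r ^ 2 = √n := by rw [rpow_one_fourth_pow hn0, Real.sqrt_eq_rpow]; norm_num
  have hr0 : 0 < r := by positivity
  have hr4' : 4 ≤ r := by
    by_contra h
    have : r ^ 4 < 4 ^ 4 := by gcongr; linarith
    have : (256 : ℝ) ≤ n := by exact_mod_cast hn256
    linarith
  set u := ⌊r ^ 3⌋₊
  have hu : (u : ℝ) ≤ r ^ 3 := Nat.floor_le (by positivity)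
  have hu' : r ^ 3 ≤ u + 1 := (Nat.lt_floor_add_one _).le
  have hu4 : 4 * u ≤ n := by
    have : (4 * u : ℝ) ≤ n := by rw [← hr4]; nlinarith [pow_pos hr0 3]
    exact_mod_cast this
  have hε0 : 0 ≤ ε := (abs_nonneg _).trans hγ
  have hexp : 8 * (u : ℝ) ^ 4 / n ^ 3 + 14 * ε * u ^ 2 / n ≤ 8 + 14 * ε * √n := by
    rw [← hr2, ← hr4]
    calc _ ≤ 8 * (r ^ 3) ^ 4 / (r ^ 4) ^ 3 + 14 * ε * (r ^ 3) ^ 2 / r ^ 4 := by gcongr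
      _ = _ := by field_simp
  refine le_trans ?_ (le_ZU hγ hε hn (by omega) hu4)
  calc 2 / 3 * r * exp (-(8 + 14 * ε * √n))
      = r ^ 3 * (2 / (3 * √n) * exp (-(8 + 14 * ε * √n))) := by rw [← hr2]; field_simp
    _ ≤ _ := by gcongr

end PartitionFunction

lemma piTail_le {θ ε : ℝ} {n l : ℕ} (hγ : |gam θ n - 1 / 2| ≤ ε) (hε : ε ≤ 1 / 100)
    (hn : 2 ^ 23 ≤ n) (hEven : Even n) (hl : 1 / 2 < (l : ℝ) / n) (hl' : 4 * l ≤ 3 * n)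
    (hsmall : 14 * ε ≤ 3 * ((l : ℝ) / n - 1 / 2) ^ 2) :
    piTail θ n l ≤ 12 * exp (8 + 14 * ε * √n)
      / ((n : ℝ) ^ ((3 : ℝ) / 4) * ((l : ℝ) / n - 1 / 2) ^ 3) * exp (-(n * Wfun θ n (l / n))) := by
  have hn0 : (0 : ℝ) < n := by exact_mod_cast pos_of_half_lt_div hl
  have hδ : 0 < (l : ℝ) / n - 1 / 2 := by linarith
  have hsplit : (n : ℝ) ^ ((3 : ℝ) / 4) = n ^ ((1 : ℝ) / 4) * √n := by
    rw [Real.sqrt_eq_rpow, ← Real.rpow_add hn0]; norm_num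
  rw [piTail_eq θ (pos_of_half_lt_div hl)]
  calc _ ≤ 8 / (√n * ((l : ℝ) / n - 1 / 2) ^ 3) * exp (-(n * Wfun θ n (l / n)))
        / (2 / 3 * (n : ℝ) ^ ((1 : ℝ) / 4) * exp (-(8 + 14 * ε * √n))) :=
        div_le_div₀ (by positivity) (sum_piWeight_Icc_le hγ hε hn hl hl' hsmall) (by positivity)
          (le_ZU_of_even hγ hε hEven (by omega))
    _ = _ := by
        rw [hsplit, exp_neg (8 + _)]
        field_simp
        ring

lemma abs_gam_sub_half (θ : ℝ) (n : ℕ) : |gam θ n - 1 / 2| = |θ| / (2 * √n) := by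
  rw [gam, show (1 - θ / √n) / 2 - 1 / 2 = -(θ / (2 * √n)) by ring, abs_neg, abs_div,
    abs_of_nonneg (by positivity : (0 : ℝ) ≤ 2 * √n)]

lemma sq_le_sqrt_mul_sq {n l : ℕ} (hn : 0 < n) {c : ℝ} (hc : 0 ≤ c)
    (h : (n : ℝ) / 2 + c * (n : ℝ) ^ ((3 : ℝ) / 4) ≤ l) :
    c ^ 2 ≤ √n * ((l : ℝ) / n - 1 / 2) ^ 2 := by
  have hn' : (0 : ℝ) < n := by exact_mod_cast hn
  have hδ : c * (n : ℝ) ^ ((3 : ℝ) / 4) ≤ n * ((l : ℝ) / n - 1 / 2) := by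
    rw [mul_sub, mul_div_cancel₀ _ hn'.ne']; linarith
  have hsq := pow_le_pow_left₀ (by positivity) hδ 2
  rw [mul_pow, rpow_three_fourths_sq hn'.le, mul_pow] at hsq
  have hs : 0 < √(n : ℝ) := Real.sqrt_pos.2 hn'
  have hss : √(n : ℝ) * √n = n := Real.mul_self_sqrt hn'.le
  refine le_of_mul_le_mul_left ?_ (mul_pos hn' hs)
  calc (n : ℝ) * √n * c ^ 2 = c ^ 2 * (n * √n) := by ring
    _ ≤ (n : ℝ) ^ 2 * ((l : ℝ) / n - 1 / 2) ^ 2 := hsq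
    _ = _ := by linear_combination (-(n : ℝ) * ((l : ℝ) / n - 1 / 2) ^ 2) * hss

lemma abs_div_two_mul_sqrt_le {θ : ℝ} {n : ℕ} (h : 2500 * θ ^ 2 ≤ n) :
    |θ| / (2 * √n) ≤ 1 / 100 := by
  have : 50 * |θ| ≤ √n := Real.le_sqrt_of_sq_le (by nlinarith [sq_abs θ])
  exact div_le_of_le_mul₀ (by positivity) (by norm_num) (by linarith)

lemma half_lt_div_of_le {n l : ℕ} (hn : 0 < n) {c : ℝ} (hc : 0 < c)
    (h : (n : ℝ) / 2 + c * (n : ℝ) ^ ((3 : ℝ) / 4) ≤ l) : 1 / 2 < (l : ℝ) / n := by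
  have hn' : (0 : ℝ) < n := by exact_mod_cast hn
  rw [lt_div_iff₀ hn']
  nlinarith [mul_pos hc (Real.rpow_pos_of_pos hn' ((3 : ℝ) / 4))]

lemma one_div_rpow_mul_pow_three_le {n : ℕ} (hn : 0 < n) {δ : ℝ} (hδ : 0 < δ)
    (h : 1 ≤ √n * δ ^ 2) :
    1 / ((n : ℝ) ^ ((3 : ℝ) / 4) * δ ^ 3) ≤ (n : ℝ) ^ ((3 : ℝ) / 4) / (n * δ) := by
  have hn' : (0 : ℝ) < n := by exact_mod_cast hn
  rw [div_le_div_iff₀ (by positivity) (by positivity), one_mul, ← mul_assoc, ← sq,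
    rpow_three_fourths_sq hn'.le]
  nlinarith [mul_le_mul_of_nonneg_left h (mul_pos hn' hδ).le]

/-- Tail bound on the middle interval: for large `c2` and `n` large,
 for `m_n + c2 n^{3/4} ≤ l ≤ (3/4)n`, `π_n([l,n]) ≤ K (n^{3/4}/(l - m_n)) e^{-nW(l/n)}`. -/
theorem piTail_middle_interval_bound (θ : ℝ) :
    ∃ K c0 : ℝ, 0 < K ∧ 0 < c0 ∧ ∀ c2 : ℝ, c0 ≤ c2 →
      ∃ N : ℕ, ∀ n : ℕ, N ≤ n → Even n →
        ∀ l : ℕ, (n : ℝ) / 2 + c2 * (n : ℝ) ^ ((3 : ℝ) / 4) ≤ l → 4 * l ≤ 3 * n →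
          piTail θ n l
            ≤ K * ((n : ℝ) ^ ((3 : ℝ) / 4) / ((l : ℝ) - (n : ℝ) / 2))
              * Real.exp (-(n : ℝ) * Wfun θ n ((l : ℝ) / n)) := by
  refine ⟨12 * exp (8 + 7 * |θ|), 1 + |θ|, by positivity, by positivity, fun c2 hc2 =>
    ⟨2 ^ 23 + ⌈2500 * θ ^ 2⌉₊, fun n hN hEven l hl hl' => ?_⟩⟩
  have hn0 : 0 < n := by omega
  have hs : 0 < √(n : ℝ) := Real.sqrt_pos.2 (by exact_mod_cast hn0)
  have hε : |θ| / (2 * √n) ≤ 1 / 100 := abs_div_two_mul_sqrt_le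
    ((Nat.le_ceil _).trans (by exact_mod_cast (by omega : ⌈2500 * θ ^ 2⌉₊ ≤ n)))
  have hc := sq_le_sqrt_mul_sq hn0 (by linarith [abs_nonneg θ]) hl
  have hl2 := half_lt_div_of_le hn0 (by linarith [abs_nonneg θ]) hl
  have hsmall : 14 * (|θ| / (2 * √n)) ≤ 3 * ((l : ℝ) / n - 1 / 2) ^ 2 := by
    rw [show 14 * (|θ| / (2 * √n)) = 7 * |θ| / √n by ring, div_le_iff₀ hs]
    nlinarith [abs_nonneg θ, sq_nonneg (|θ| - 1 / 6)]
  refine (piTail_le (abs_gam_sub_half θ n).le hε (by omega) hEven hl2 hl' hsmall).trans ?_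
  rw [show 14 * (|θ| / (2 * √n)) * √n = 7 * |θ| by field_simp; ring,
    show (l : ℝ) - n / 2 = n * ((l : ℝ) / n - 1 / 2) by field_simp, neg_mul,
    div_eq_mul_one_div (12 * _)]
  gcongr _ * ?_ * _
  exact one_div_rpow_mul_pow_three_le hn0 (by linarith) (by nlinarith [abs_nonneg θ])

end
end

section
/- Let f: ℝ → ℝ be a smooth function with f(0) = f'(0) = f'''(0) = 0, and set b = f⁗(0)/24. If f⁽⁵⁾(x) ≥ 0 for all x ≥ 0, then the function g(x) = f(x)/x² − b x² is increasing on (0, ∞), i.e., for all 0 < x ≤ y one has g(x) ≤ g(y). -/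
open Real Filter Finset MeasureTheory
open scoped Classical BigOperators NNReal

noncomputable section

/-- If `ψ(0) = 0` and `ψ' ≥ 0` on `[0,∞)`, then `ψ ≥ 0` on `[0,∞)`. -/
lemma aux_nonneg_of_deriv {ψ ψ' : ℝ → ℝ} (hd : ∀ x, HasDerivAt ψ (ψ' x) x)
    (h0 : ψ 0 = 0) (hp : ∀ x, 0 ≤ x → 0 ≤ ψ' x) : ∀ x, 0 ≤ x → 0 ≤ ψ x := by
  intro x hx
  have hmono : MonotoneOn ψ (Set.Ici 0) := by
    apply monotoneOn_of_deriv_nonneg (convex_Ici 0)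
    · exact fun t _ => (hd t).continuousAt.continuousWithinAt
    · exact fun t _ => ((hd t).differentiableAt).differentiableWithinAt
    · intro t ht
      rw [interior_Ici] at ht
      rw [(hd t).deriv]
      exact hp t ht.le
  have := hmono (Set.self_mem_Ici) (Set.mem_Ici.2 hx) hx
  rwa [h0] at this

/-- If `f` is smooth with `f(0) = f'(0) = f'''(0) = 0`, `b = f⁗(0)/24`, and
`f⁽⁵⁾ ≥ 0` on `[0,∞)`, then `g(x) = f(x)/x² - b x²` is increasing on `(0,∞)`. -/
theorem quartic_comparison_increasing (f : ℝ → ℝ) (hf : ContDiff ℝ (⊤ : ℕ∞) f)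
    (h0 : f 0 = 0) (h1 : deriv f 0 = 0) (h3 : iteratedDeriv 3 f 0 = 0)
    (h5 : ∀ x : ℝ, 0 ≤ x → 0 ≤ iteratedDeriv 5 f x) :
    ∀ x y : ℝ, 0 < x → x ≤ y →
      f x / x ^ 2 - iteratedDeriv 4 f 0 / 24 * x ^ 2
        ≤ f y / y ^ 2 - iteratedDeriv 4 f 0 / 24 * y ^ 2 := by
  intro x y hx hxy
  set b : ℝ := iteratedDeriv 4 f 0 / 24 with hb
  have hdiff : ∀ k : ℕ, Differentiable ℝ (iteratedDeriv k f) := fun k =>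
    hf.differentiable_iteratedDeriv k (by exact_mod_cast ENat.coe_lt_top k)
  have hder : ∀ (k : ℕ) (t : ℝ), HasDerivAt (iteratedDeriv k f) (iteratedDeriv (k+1) f t) t := by
    intro k t
    rw [iteratedDeriv_succ]
    exact ((hdiff k) t).hasDerivAt
  have hder0 : ∀ t : ℝ, HasDerivAt f (deriv f t) t := fun t => (hf.differentiable (by simp) t).hasDerivAt
  have hder1 : ∀ t : ℝ, HasDerivAt (deriv f) (iteratedDeriv 2 f t) t := by
    intro t
    have := hder 1 t
    rwa [iteratedDeriv_one] at this
  -- the chain of auxiliary functions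
  set φ3 : ℝ → ℝ := fun t => iteratedDeriv 3 f t + t * iteratedDeriv 4 f t - 48 * b * t with hφ3
  set φ2 : ℝ → ℝ := fun t => t * iteratedDeriv 3 f t - 24 * b * t ^ 2 with hφ2
  set φ1 : ℝ → ℝ := fun t => t * iteratedDeriv 2 f t - deriv f t - 8 * b * t ^ 3 with hφ1
  set φ0 : ℝ → ℝ := fun t => t * deriv f t - 2 * f t - 2 * b * t ^ 4 with hφ0
  -- f⁗ is monotone on [0,∞)
  have h4mono : ∀ t : ℝ, 0 ≤ t → iteratedDeriv 4 f 0 ≤ iteratedDeriv 4 f t := by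
    intro t ht
    have := aux_nonneg_of_deriv (ψ := fun s => iteratedDeriv 4 f s - iteratedDeriv 4 f 0)
      (ψ' := iteratedDeriv 5 f)
      (fun s => (hder 4 s).sub_const _) (by simp) h5 t ht
    linarith
  -- φ3' ≥ 0 on [0,∞)
  have hφ3d : ∀ t : ℝ, HasDerivAt φ3 (2 * iteratedDeriv 4 f t + t * iteratedDeriv 5 f t - 48 * b) t := by
    intro t
    have h := ((hder 3 t).add ((hasDerivAt_id t).mul (hder 4 t))).sub
      ((hasDerivAt_id t).const_mul (48 * b))
    refine h.congr_deriv ?_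
    simp only [id_eq]
    norm_num
    ring
  have hφ3nn : ∀ t : ℝ, 0 ≤ t → 0 ≤ φ3 t := by
    apply aux_nonneg_of_deriv hφ3d
    · simp [hφ3, h3]
    · intro t ht
      have h1 := h4mono t ht
      have h2 := h5 t ht
      have hb24 : iteratedDeriv 4 f 0 = 24 * b := by rw [hb]; ring
      nlinarith
  have hφ2d : ∀ t : ℝ, HasDerivAt φ2 (φ3 t) t := by
    intro t
    have h := ((hasDerivAt_id t).mul (hder 3 t)).sub
      ((hasDerivAt_pow 2 t).const_mul (24 * b))
    refine h.congr_deriv ?_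
    simp only [hφ3, id_eq]
    norm_num
    ring
  have hφ2nn : ∀ t : ℝ, 0 ≤ t → 0 ≤ φ2 t := by
    apply aux_nonneg_of_deriv hφ2d
    · simp [hφ2]
    · exact hφ3nn
  have hφ1d : ∀ t : ℝ, HasDerivAt φ1 (φ2 t) t := by
    intro t
    have h := (((hasDerivAt_id t).mul (hder 2 t)).sub (hder1 t)).sub
      ((hasDerivAt_pow 3 t).const_mul (8 * b))
    refine h.congr_deriv ?_
    simp only [hφ2, id_eq]
    norm_num
    ring
  have hφ1nn : ∀ t : ℝ, 0 ≤ t → 0 ≤ φ1 t := by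
    apply aux_nonneg_of_deriv hφ1d
    · simp [hφ1, h1]
    · exact hφ2nn
  have hφ0d : ∀ t : ℝ, HasDerivAt φ0 (φ1 t) t := by
    intro t
    have h := (((hasDerivAt_id t).mul (hder1 t)).sub ((hder0 t).const_mul 2)).sub
      ((hasDerivAt_pow 4 t).const_mul (2 * b))
    refine h.congr_deriv ?_
    simp only [hφ1, id_eq, iteratedDeriv_one]
    norm_num
    ring
  have hφ0nn : ∀ t : ℝ, 0 ≤ t → 0 ≤ φ0 t := by
    apply aux_nonneg_of_deriv hφ0d
    · simp [hφ0, h0]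
    · exact hφ1nn
  -- derivative of g on (0,∞)
  set g : ℝ → ℝ := fun t => f t / t ^ 2 - b * t ^ 2 with hg
  have hgd : ∀ t ∈ Set.Ioi (0 : ℝ), HasDerivAt g (φ0 t / t ^ 3) t := by
    intro t ht
    have htne : (t : ℝ) ≠ 0 := ne_of_gt ht
    have ht2 : t ^ 2 ≠ 0 := pow_ne_zero 2 htne
    have h := ((hder0 t).div (hasDerivAt_pow 2 t) ht2).sub
      ((hasDerivAt_pow 2 t).const_mul b)
    refine h.congr_deriv ?_
    simp only [hφ0, id_eq]
    field_simp
    ring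
  have hmono : MonotoneOn g (Set.Ioi 0) := by
    apply monotoneOn_of_deriv_nonneg (convex_Ioi 0)
    · exact fun t ht => (hgd t ht).continuousAt.continuousWithinAt
    · intro t ht
      rw [interior_Ioi] at ht
      exact (hgd t ht).differentiableAt.differentiableWithinAt
    · intro t ht
      rw [interior_Ioi] at ht
      rw [(hgd t ht).deriv]
      have ht3 : (0:ℝ) < t ^ 3 := pow_pos ht 3
      exact div_nonneg (hφ0nn t ht.le) ht3.le
  have hy : (0:ℝ) < y := lt_of_lt_of_le hx hxy
  have := hmono (Set.mem_Ioi.2 hx) (Set.mem_Ioi.2 hy) hxy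
  simpa [hg, hb] using this

end
end
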